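/- arXiv:quant-ph/0103086 — 3 statements merged into one kernel-verified Lean document; each statement's English description precedes it below -/
import Mathlib

section
/- Let Φ be a qubit channel, let K ≥ 1, let p ≥ 1, and suppose that for every positive semidefinite 2K×2K matrix M, written in K×K blocks as M = [[X, Y],[Y*, Z]], one has ||(I_K ⊗ Φ)(M)||_p ≤ ν_p(Φ)·(||X||_p + ||Z||_p). Then for every completely positive trace-preserving map Ω on M_K(ℂ), ν_p(Ω ⊗ Φ) = ν_p(Ω) · ν_p(Φ). -/
open scoped Kronecker ComplexOrder
open Matrix

noncomputable section

/-- `Tr |A|^p` where `|A| = (AᴴA)^{1/2}`, computed via the eigenvalues of `AᴴA`. -/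
def traceAbsPow {n : Type*} [Fintype n] [DecidableEq n] (p : ℝ) (A : Matrix n n ℂ) : ℝ :=
  ∑ i, (Matrix.posSemidef_conjTranspose_mul_self A).1.eigenvalues i ^ (p / 2)

/-- The noncommutative (Schatten) `l_p` norm `‖A‖_p = (Tr |A|^p)^{1/p}`. -/
def schattenNorm {n : Type*} [Fintype n] [DecidableEq n] (p : ℝ) (A : Matrix n n ℂ) : ℝ :=
  traceAbsPow p A ^ (1 / p)

/-- A quantum state: a positive semidefinite matrix of trace one. -/
def IsState {n : Type*} [Fintype n] (ρ : Matrix n n ℂ) : Prop :=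
  ρ.PosSemidef ∧ ρ.trace = 1

/-- The maximal `l_p` norm `ν_p(Φ) = sup_ρ ‖Φ(ρ)‖_p`, supremum over states. -/
def maxPNorm {n m : Type*} [Fintype n] [Fintype m] [DecidableEq m] (p : ℝ)
    (Φ : Matrix n n ℂ → Matrix m m ℂ) : ℝ :=
  sSup {x | ∃ ρ, IsState ρ ∧ x = schattenNorm p (Φ ρ)}

/-- Von Neumann entropy `S(ρ) = -Tr ρ log ρ` (defined via eigenvalues; `0 log 0 = 0`). -/
def vnEntropy {n : Type*} [Fintype n] [DecidableEq n] (ρ : Matrix n n ℂ) : ℝ :=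
  if h : ρ.IsHermitian then -∑ i, h.eigenvalues i * Real.log (h.eigenvalues i) else 0

/-- Minimal output entropy `S_min(Φ) = inf_ρ S(Φ(ρ))`, infimum over states. -/
def minOutputEntropy {n m : Type*} [Fintype n] [Fintype m] [DecidableEq m]
    (Φ : Matrix n n ℂ → Matrix m m ℂ) : ℝ :=
  sInf {x | ∃ ρ, IsState ρ ∧ x = vnEntropy (Φ ρ)}

/-- Holevo capacity `χ*(Φ)`: the supremum over finite ensembles of states of
`S(Σ π_i Φ(ρ_i)) - Σ π_i S(Φ(ρ_i))`. -/
def holevoCap {n m : Type*} [Fintype n] [Fintype m] [DecidableEq m]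
    (Φ : Matrix n n ℂ → Matrix m m ℂ) : ℝ :=
  sSup {x | ∃ (B : ℕ) (π : Fin B → ℝ) (ρ : Fin B → Matrix n n ℂ),
    (∀ i, 0 ≤ π i) ∧ (∑ i, π i = 1) ∧ (∀ i, IsState (ρ i)) ∧
    x = vnEntropy (∑ i, (π i : ℂ) • Φ (ρ i)) - ∑ i, π i * vnEntropy (Φ (ρ i))}

/-- The map `I_K ⊗ Φ` acting blockwise on matrices over `K × n`. -/
def idTensor {K n m : Type*} (Φ : Matrix n n ℂ → Matrix m m ℂ)
    (M : Matrix (K × n) (K × n) ℂ) : Matrix (K × m) (K × m) ℂ :=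
  Matrix.of fun p q => Φ (Matrix.of fun a b => M (p.1, a) (q.1, b)) p.2 q.2

/-- The tensor product map `Ω ⊗ Φ` on matrices over `K × n`. -/
def tensorFun {K n : Type*} [Fintype K] [DecidableEq K]
    (Ω : Matrix K K ℂ → Matrix K K ℂ) (Φ : Matrix n n ℂ → Matrix n n ℂ)
    (M : Matrix (K × n) (K × n) ℂ) : Matrix (K × n) (K × n) ℂ :=
  Matrix.of fun p q => ∑ r, ∑ s,
    Ω (Matrix.single r s 1) p.1 q.1 *
      Φ (Matrix.of fun a b => M (r, a) (s, b)) p.2 q.2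

/-- A quantum channel: a linear, trace-preserving, completely positive map. -/
def IsQuantumChannel {n : Type*} [Fintype n] (Φ : Matrix n n ℂ → Matrix n n ℂ) : Prop :=
  (∀ A B, Φ (A + B) = Φ A + Φ B) ∧
  (∀ (c : ℂ) (A), Φ (c • A) = c • Φ A) ∧
  (∀ A, (Φ A).trace = A.trace) ∧
  (∀ (K : ℕ) (M : Matrix (Fin K × n) (Fin K × n) ℂ), M.PosSemidef → (idTensor Φ M).PosSemidef)

/-- The Pauli matrices `σ₁, σ₂, σ₃`. -/
def pauli : Fin 3 → Matrix (Fin 2) (Fin 2) ℂ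
  | 0 => !![0, 1; 1, 0]
  | 1 => !![0, -Complex.I; Complex.I, 0]
  | 2 => !![1, 0; 0, -1]

/-- The qubit map with Pauli representation parameters `(λ_1,λ_2,λ_3,t_1,t_2,t_3)`:
the trace-preserving linear map sending the state with Bloch vector `w` to the state with
Bloch vector `(λ_1 w_1 + t_1, λ_2 w_2 + t_2, λ_3 w_3 + t_3)`. -/
def pauliFun (l t : Fin 3 → ℝ) (ρ : Matrix (Fin 2) (Fin 2) ℂ) : Matrix (Fin 2) (Fin 2) ℂ :=
  (2 : ℂ)⁻¹ • (ρ.trace • (1 : Matrix (Fin 2) (Fin 2) ℂ) +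
    ∑ i, ((l i : ℂ) * (ρ * pauli i).trace + (t i : ℂ) * ρ.trace) • pauli i)

/-- Matrix logarithm of a Hermitian matrix, via the spectral decomposition. -/
def matLog {n : Type*} [Fintype n] [DecidableEq n] (A : Matrix n n ℂ) : Matrix n n ℂ :=
  if h : A.IsHermitian then
    (h.eigenvectorUnitary : Matrix n n ℂ) *
      Matrix.diagonal (fun i => (Real.log (h.eigenvalues i) : ℂ)) *
      (h.eigenvectorUnitary : Matrix n n ℂ)ᴴ
  else 0

/-- Relative entropy `S(ω | ρ) = Tr ω (log ω - log ρ)`. -/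
def relEntropy {n : Type*} [Fintype n] [DecidableEq n] (ω ρ : Matrix n n ℂ) : ℝ :=
  ((ω * (matLog ω - matLog ρ)).trace).re

/-- Partial trace over the first tensor factor. -/
def ptrace1 {K n : Type*} [Fintype K] (M : Matrix (K × n) (K × n) ℂ) : Matrix n n ℂ :=
  Matrix.of fun a b => ∑ i, M (i, a) (i, b)

/-- Partial trace over the second tensor factor. -/
def ptrace2 {K n : Type*} [Fintype n] (M : Matrix (K × n) (K × n) ℂ) : Matrix K K ℂ :=
  Matrix.of fun i j => ∑ a, M (i, a) (j, a)

/-- The `(i,j)` block (`K × K`) of a `2K × 2K` matrix indexed by `K × Fin 2`. -/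
def blk {K : Type*} (i j : Fin 2) (M : Matrix (K × Fin 2) (K × Fin 2) ℂ) : Matrix K K ℂ :=
  Matrix.of fun a b => M (a, i) (b, j)

end


namespace AuxProof
open Polynomial
set_option linter.unusedSectionVars false
set_option linter.unusedTactic false

variable {n : Type*} [Fintype n] [DecidableEq n]

lemma charpoly_diagonal' (d : n → ℂ) :
    (Matrix.diagonal d).charpoly = ∏ i, (X - C (d i)) := by
  have h : charmatrix (Matrix.diagonal d) = Matrix.diagonal fun i => X - C (d i) := by
    ext i j
    by_cases hij : i = j
    · subst hij; simp [charmatrix_apply_eq]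
    · rw [charmatrix_apply_ne _ _ _ hij, Matrix.diagonal_apply_ne _ hij,
        Matrix.diagonal_apply_ne _ hij]
      simp
  rw [Matrix.charpoly, h, det_diagonal]

lemma charpoly_unitary_conj (U : Matrix.unitaryGroup n ℂ) (D : Matrix n n ℂ) :
    ((U : Matrix n n ℂ) * D * star (U : Matrix n n ℂ)).charpoly = D.charpoly := by
  set V : Matrix n n ℂ := (U : Matrix n n ℂ) with hV
  have hVV : V * star V = 1 := (Unitary.mem_iff.mp U.2).2
  have hmapVV : V.map ⇑(C : ℂ →+* ℂ[X]) * (star V).map ⇑(C : ℂ →+* ℂ[X]) = 1 := by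
    rw [← Matrix.map_mul, hVV]
    simp
  have hscalar : Matrix.scalar n (X : ℂ[X]) = (X : ℂ[X]) • (1 : Matrix n n ℂ[X]) := by
    rw [Matrix.smul_one_eq_diagonal]; rfl
  have h1 : charmatrix (V * D * star V) =
      V.map ⇑(C : ℂ →+* ℂ[X]) * charmatrix D * (star V).map ⇑(C : ℂ →+* ℂ[X]) := by
    unfold charmatrix
    rw [RingHom.mapMatrix_apply, RingHom.mapMatrix_apply, hscalar]
    rw [Matrix.mul_sub, Matrix.sub_mul]
    rw [mul_smul_comm, smul_mul_assoc, Matrix.mul_one, hmapVV]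
    rw [← Matrix.map_mul, ← Matrix.map_mul]
  rw [Matrix.charpoly, Matrix.charpoly, h1, det_mul, det_mul]
  rw [mul_right_comm, ← det_mul, hmapVV, det_one, one_mul]

lemma sum_f_eigenvalues {A : Matrix n n ℂ} (hA : A.IsHermitian) (U : Matrix.unitaryGroup n ℂ)
    (d : n → ℝ)
    (h : A = (U : Matrix n n ℂ) * Matrix.diagonal (fun i => (d i : ℂ)) * star (U : Matrix n n ℂ))
    (f : ℝ → ℝ) : ∑ i, f (hA.eigenvalues i) = ∑ i, f (d i) := by
  have h1 : A.charpoly = ∏ i, (X - C ((d i : ℂ))) := by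
    rw [h, charpoly_unitary_conj, charpoly_diagonal']
  have h2 : A.charpoly = ∏ i, (X - C ((hA.eigenvalues i : ℂ))) := by
    conv_lhs => rw [hA.spectral_theorem, Unitary.conjStarAlgAut_apply]
    rw [charpoly_unitary_conj, charpoly_diagonal']
    simp only [Function.comp_apply, RCLike.ofReal_alg]
    norm_num
  have h3 : (∏ i, (X - C ((hA.eigenvalues i : ℂ)))) = ∏ i, (X - C ((d i : ℂ))) :=
    h2.symm.trans h1
  have conv : ∀ g : n → ℝ, (∏ i, (X - C ((g i : ℂ)))) =
      ((Finset.univ.val.map fun i => ((g i : ℂ))).map fun a => X - C a).prod := by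
    intro g
    rw [Multiset.map_map, Finset.prod_eq_multiset_prod]
    rfl
  have h4 : (Finset.univ.val.map fun i => ((hA.eigenvalues i : ℂ))) =
      Finset.univ.val.map fun i => ((d i : ℂ)) := by
    have := congrArg Polynomial.roots ((conv _).symm.trans (h3.trans (conv _)))
    rwa [roots_multiset_prod_X_sub_C, roots_multiset_prod_X_sub_C] at this
  have h5 : Finset.univ.val.map hA.eigenvalues = Finset.univ.val.map d := by
    apply Multiset.map_injective Complex.ofReal_injective
    rw [Multiset.map_map, Multiset.map_map]
    exact h4
  calc ∑ i, f (hA.eigenvalues i) = ((Finset.univ.val.map hA.eigenvalues).map f).sum := by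
        rw [Multiset.map_map, Finset.sum_eq_multiset_sum]; rfl
    _ = ((Finset.univ.val.map d).map f).sum := by rw [h5]
    _ = ∑ i, f (d i) := by rw [Multiset.map_map, Finset.sum_eq_multiset_sum]; rfl


variable {n : Type*} [Fintype n] [DecidableEq n] {m : Type*} [Fintype m] [DecidableEq m]


lemma ofReal_comp (g : n → ℝ) :
    (RCLike.ofReal ∘ g : n → ℂ) = fun i => ((g i : ℝ) : ℂ) := by
  funext i
  rw [Function.comp_apply, RCLike.ofReal_alg, Complex.real_smul, mul_one]

lemma spectral' {A : Matrix n n ℂ} (hA : A.IsHermitian) :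
    A = (hA.eigenvectorUnitary : Matrix n n ℂ) *
      Matrix.diagonal (fun i => ((hA.eigenvalues i : ℝ) : ℂ)) *
      star (hA.eigenvectorUnitary : Matrix n n ℂ) := by
  conv_lhs => rw [hA.spectral_theorem, Unitary.conjStarAlgAut_apply]
  rw [ofReal_comp]

lemma traceAbsPow_eq {p : ℝ} {A : Matrix n n ℂ} (U : Matrix.unitaryGroup n ℂ) (g : n → ℝ)
    (hg : ∀ i, 0 ≤ g i)
    (h : A = (U : Matrix n n ℂ) * Matrix.diagonal (fun i => (g i : ℂ)) * star (U : Matrix n n ℂ)) :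
    traceAbsPow p A = ∑ i, g i ^ p := by
  set V : Matrix n n ℂ := (U : Matrix n n ℂ) with hV
  have hD : (Matrix.diagonal (fun i => (g i : ℂ)))ᴴ = Matrix.diagonal (fun i => (g i : ℂ)) := by
    have hst : star (fun i => ((g i : ℝ) : ℂ)) = fun i => ((g i : ℝ) : ℂ) := by
      funext i
      rw [Pi.star_apply, Complex.star_def, Complex.conj_ofReal]
    rw [Matrix.diagonal_conjTranspose, hst]
  have hAH : Aᴴ = A := by
    rw [h]
    simp only [Matrix.conjTranspose_mul, Matrix.star_eq_conjTranspose,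
      Matrix.conjTranspose_conjTranspose, hD, Matrix.mul_assoc]
  have hdec : Aᴴ * A = V * Matrix.diagonal (fun i => ((g i * g i : ℝ) : ℂ)) * star V := by
    rw [hAH, h]
    have hsV : star V * V = 1 := (Unitary.mem_iff.mp U.2).1
    calc (V * Matrix.diagonal (fun i => (g i : ℂ)) * star V) *
          (V * Matrix.diagonal (fun i => (g i : ℂ)) * star V)
        = V * (Matrix.diagonal (fun i => (g i : ℂ)) * ((star V * V) *
            Matrix.diagonal (fun i => (g i : ℂ)))) * star V := by
          simp only [Matrix.mul_assoc]
      _ = V * Matrix.diagonal (fun i => ((g i * g i : ℝ) : ℂ)) * star V := by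
          rw [hsV, Matrix.one_mul, Matrix.diagonal_mul_diagonal]
          simp only [Matrix.mul_assoc]
          congr 2
          funext i
          push_cast
          ring
  unfold traceAbsPow
  rw [sum_f_eigenvalues _ U _ hdec (fun x => x ^ (p / 2))]
  refine Finset.sum_congr rfl fun i _ => ?_
  rw [← pow_two, ← Real.rpow_natCast (g i) 2, ← Real.rpow_mul (hg i)]
  congr 1
  push_cast
  ring

lemma traceAbsPow_psd {p : ℝ} {A : Matrix n n ℂ} (hA : A.PosSemidef) :
    traceAbsPow p A = ∑ i, hA.1.eigenvalues i ^ p :=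
  traceAbsPow_eq hA.1.eigenvectorUnitary hA.1.eigenvalues hA.eigenvalues_nonneg (spectral' hA.1)

lemma traceAbsPow_nonneg (p : ℝ) (A : Matrix n n ℂ) : 0 ≤ traceAbsPow p A :=
  Finset.sum_nonneg fun i _ => Real.rpow_nonneg
    ((Matrix.posSemidef_conjTranspose_mul_self A).eigenvalues_nonneg i) _

lemma schattenNorm_nonneg (p : ℝ) (A : Matrix n n ℂ) : 0 ≤ schattenNorm p A :=
  Real.rpow_nonneg (traceAbsPow_nonneg p A) _

lemma schattenNorm_smul {p : ℝ} (hp : 1 ≤ p) {A : Matrix n n ℂ} (hA : A.PosSemidef)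
    {c : ℝ} (hc : 0 ≤ c) :
    schattenNorm p ((c : ℂ) • A) = c * schattenNorm p A := by
  have hp0 : p ≠ 0 := by linarith
  have hDsmul : Matrix.diagonal (fun i => ((c * hA.1.eigenvalues i : ℝ) : ℂ))
      = (c : ℂ) • Matrix.diagonal (fun i => ((hA.1.eigenvalues i : ℝ) : ℂ)) := by
    have hfun : ((c : ℂ) • fun i => ((hA.1.eigenvalues i : ℝ) : ℂ))
        = fun i => ((c * hA.1.eigenvalues i : ℝ) : ℂ) := by
      funext i
      rw [Pi.smul_apply, smul_eq_mul]
      push_cast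
      ring
    rw [← hfun, Matrix.diagonal_smul]
  have hdec : (c : ℂ) • A = (hA.1.eigenvectorUnitary : Matrix n n ℂ) *
      Matrix.diagonal (fun i => ((c * hA.1.eigenvalues i : ℝ) : ℂ)) *
      star (hA.1.eigenvectorUnitary : Matrix n n ℂ) := by
    conv_lhs => rw [spectral' hA.1]
    rw [hDsmul, Matrix.mul_smul, Matrix.smul_mul]
  have h1 : traceAbsPow p ((c : ℂ) • A) = c ^ p * ∑ i, hA.1.eigenvalues i ^ p := by
    rw [traceAbsPow_eq hA.1.eigenvectorUnitary _
      (fun i => mul_nonneg hc (hA.eigenvalues_nonneg i)) hdec, Finset.mul_sum]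
    exact Finset.sum_congr rfl fun i _ =>
      Real.mul_rpow hc (hA.eigenvalues_nonneg i)
  unfold schattenNorm
  rw [h1, traceAbsPow_psd hA,
    Real.mul_rpow (Real.rpow_nonneg hc p) (Finset.sum_nonneg fun i _ =>
      Real.rpow_nonneg (hA.eigenvalues_nonneg i) p),
    ← Real.rpow_mul hc, mul_one_div, div_self hp0, Real.rpow_one]

lemma kron_star (A : Matrix m m ℂ) (B : Matrix n n ℂ) :
    star (A ⊗ₖ B) = star A ⊗ₖ star B := by
  ext ⟨i, j⟩ ⟨k, l⟩
  simp [Matrix.star_apply, Matrix.star_eq_conjTranspose, Matrix.conjTranspose_apply, mul_comm]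

lemma traceAbsPow_kron {p : ℝ} {A : Matrix m m ℂ} {B : Matrix n n ℂ}
    (hA : A.PosSemidef) (hB : B.PosSemidef) :
    traceAbsPow p (A ⊗ₖ B) = traceAbsPow p A * traceAbsPow p B := by
  set U₁ := hA.1.eigenvectorUnitary with hU₁
  set U₂ := hB.1.eigenvectorUnitary with hU₂
  have hUmem : ((U₁ : Matrix m m ℂ) ⊗ₖ (U₂ : Matrix n n ℂ)) ∈ Matrix.unitaryGroup (m × n) ℂ := by
    rw [Matrix.mem_unitaryGroup_iff, kron_star, ← Matrix.mul_kronecker_mul,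
      (Unitary.mem_iff.mp U₁.2).2, (Unitary.mem_iff.mp U₂.2).2, Matrix.one_kronecker_one]
  have hdec : A ⊗ₖ B = (((⟨_, hUmem⟩ : Matrix.unitaryGroup (m × n) ℂ) : Matrix (m × n) (m × n) ℂ)) *
      Matrix.diagonal (fun q : m × n => ((hA.1.eigenvalues q.1 * hB.1.eigenvalues q.2 : ℝ) : ℂ)) *
      star (((⟨_, hUmem⟩ : Matrix.unitaryGroup (m × n) ℂ) : Matrix (m × n) (m × n) ℂ)) := by
    conv_lhs => rw [spectral' hA.1, spectral' hB.1]
    rw [← hU₁, ← hU₂, Matrix.mul_kronecker_mul, Matrix.mul_kronecker_mul]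
    congr 1
    · congr 1
      rw [Matrix.diagonal_kronecker_diagonal]
      congr 1
      funext q
      push_cast
      ring
    · rw [kron_star]
  rw [traceAbsPow_eq ⟨_, hUmem⟩ _
    (fun q => mul_nonneg (hA.eigenvalues_nonneg q.1) (hB.eigenvalues_nonneg q.2)) hdec,
    traceAbsPow_psd hA, traceAbsPow_psd hB, Finset.sum_mul_sum, Fintype.sum_prod_type]
  exact Finset.sum_congr rfl fun i _ => Finset.sum_congr rfl fun j _ =>
    Real.mul_rpow (hA.eigenvalues_nonneg i) (hB.eigenvalues_nonneg j)

lemma schattenNorm_kron {p : ℝ} {A : Matrix m m ℂ} {B : Matrix n n ℂ}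
    (hA : A.PosSemidef) (hB : B.PosSemidef) :
    schattenNorm p (A ⊗ₖ B) = schattenNorm p A * schattenNorm p B := by
  unfold schattenNorm
  rw [traceAbsPow_kron hA hB, Real.mul_rpow (traceAbsPow_nonneg p A) (traceAbsPow_nonneg p B)]

lemma trace_hermitian {A : Matrix n n ℂ} (hA : A.IsHermitian) :
    A.trace = ((∑ i, hA.eigenvalues i : ℝ) : ℂ) := by
  conv_lhs => rw [spectral' hA]
  rw [Matrix.trace_mul_cycle, (Unitary.mem_iff.mp hA.eigenvectorUnitary.2).1,
    Matrix.one_mul, Matrix.trace_diagonal]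
  push_cast
  rfl

lemma psd_trace_re_nonneg {A : Matrix n n ℂ} (hA : A.PosSemidef) : 0 ≤ A.trace.re := by
  rw [trace_hermitian hA.1]
  simp only [Complex.ofReal_re]
  exact Finset.sum_nonneg fun i _ => hA.eigenvalues_nonneg i

lemma psd_trace_eq_re {A : Matrix n n ℂ} (hA : A.PosSemidef) :
    A.trace = ((A.trace.re : ℝ) : ℂ) := by
  rw [trace_hermitian hA.1]
  simp

lemma psd_of_trace_zero {A : Matrix n n ℂ} (hA : A.PosSemidef) (h : A.trace = 0) : A = 0 := by
  have h1 : ∑ i, hA.1.eigenvalues i = 0 := by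
    have := trace_hermitian hA.1
    rw [h] at this
    exact_mod_cast this.symm
  have h2 : ∀ i ∈ Finset.univ, hA.1.eigenvalues i = 0 :=
    (Finset.sum_eq_zero_iff_of_nonneg fun i _ => hA.eigenvalues_nonneg i).mp h1
  have hfun : (fun i => ((hA.1.eigenvalues i : ℝ) : ℂ)) = fun _ : n => (0 : ℂ) := by
    funext i
    rw [h2 i (Finset.mem_univ i)]
    simp
  rw [spectral' hA.1, hfun, Matrix.diagonal_zero, Matrix.mul_zero, Matrix.zero_mul]

lemma schattenNorm_le_card {p : ℝ} (hp : 1 ≤ p) [Nonempty n] {A : Matrix n n ℂ}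
    (hA : A.PosSemidef) (ht : A.trace = 1) : schattenNorm p A ≤ (Fintype.card n : ℝ) := by
  have hsum : ∑ i, hA.1.eigenvalues i = 1 := by
    have := trace_hermitian hA.1
    rw [ht] at this
    exact_mod_cast this.symm
  have hle1 : ∀ i, hA.1.eigenvalues i ≤ 1 := by
    intro i
    rw [← hsum]
    exact Finset.single_le_sum (fun j _ => hA.eigenvalues_nonneg j) (Finset.mem_univ i)
  have h1 : traceAbsPow p A ≤ (Fintype.card n : ℝ) := by
    rw [traceAbsPow_psd hA]
    calc ∑ i, hA.1.eigenvalues i ^ p ≤ ∑ _i : n, (1 : ℝ) :=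
          Finset.sum_le_sum fun i _ =>
            Real.rpow_le_one (hA.eigenvalues_nonneg i) (hle1 i) (by linarith)
      _ = (Fintype.card n : ℝ) := by simp
  have hcard1 : (1 : ℝ) ≤ (Fintype.card n : ℝ) := by
    exact_mod_cast Nat.one_le_iff_ne_zero.mpr Fintype.card_ne_zero
  calc schattenNorm p A ≤ (Fintype.card n : ℝ) ^ (1 / p) :=
        Real.rpow_le_rpow (traceAbsPow_nonneg p A) h1 (by positivity)
    _ ≤ (Fintype.card n : ℝ) ^ (1 : ℝ) := by
        apply Real.rpow_le_rpow_of_exponent_le hcard1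
        rw [div_le_one (by linarith)]
        linarith
    _ = (Fintype.card n : ℝ) := by rw [Real.rpow_one]


section Stage3
variable {K : Type*} [Fintype K] [DecidableEq K] {n : Type*} [Fintype n] [DecidableEq n]

lemma chan_zero {Φ : Matrix n n ℂ → Matrix n n ℂ}
    (hs : ∀ (c : ℂ) A, Φ (c • A) = c • Φ A) : Φ 0 = 0 := by
  have := hs 0 0
  simpa using this

lemma chan_sum {Φ : Matrix n n ℂ → Matrix n n ℂ}
    (h : ∀ A B, Φ (A + B) = Φ A + Φ B) (hs : ∀ (c : ℂ) A, Φ (c • A) = c • Φ A)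
    {ι : Type*} (s : Finset ι) (f : ι → Matrix n n ℂ) :
    Φ (∑ i ∈ s, f i) = ∑ i ∈ s, Φ (f i) := by
  classical
  induction s using Finset.induction_on with
  | empty => simpa using chan_zero hs
  | insert _ _ hx ih => rw [Finset.sum_insert hx, h, ih, Finset.sum_insert hx]

lemma chan_eq_sum {Φ : Matrix n n ℂ → Matrix n n ℂ}
    (h : ∀ A B, Φ (A + B) = Φ A + Φ B) (hs : ∀ (c : ℂ) A, Φ (c • A) = c • Φ A)
    (X : Matrix n n ℂ) :
    Φ X = ∑ r, ∑ s, X r s • Φ (Matrix.single r s 1) := by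
  conv_lhs => rw [Matrix.matrix_eq_sum_single X]
  rw [chan_sum h hs]
  refine Finset.sum_congr rfl fun r _ => ?_
  rw [chan_sum h hs]
  refine Finset.sum_congr rfl fun t _ => ?_
  rw [← hs, Matrix.smul_single]
  norm_num

/-- The map `Ω ⊗ I` acting on matrices over `K × n`. -/
noncomputable def auxOmI (Ω : Matrix K K ℂ → Matrix K K ℂ) (M : Matrix (K × n) (K × n) ℂ) :
    Matrix (K × n) (K × n) ℂ :=
  Matrix.of fun p q => ∑ r, ∑ s,
    Ω (Matrix.single r s 1) p.1 q.1 * M (r, p.2) (s, q.2)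

lemma tensorFun_eq (Ω : Matrix K K ℂ → Matrix K K ℂ) {Φ : Matrix n n ℂ → Matrix n n ℂ}
    (h : ∀ A B, Φ (A + B) = Φ A + Φ B) (hs : ∀ (c : ℂ) A, Φ (c • A) = c • Φ A)
    (M : Matrix (K × n) (K × n) ℂ) :
    tensorFun Ω Φ M = idTensor Φ (auxOmI Ω M) := by
  ext ⟨p1, p2⟩ ⟨q1, q2⟩
  show (∑ r, ∑ s, Ω (Matrix.single r s 1) p1 q1 *
      Φ (Matrix.of fun a b => M (r, a) (s, b)) p2 q2)
    = Φ (Matrix.of fun a b => auxOmI Ω M (p1, a) (q1, b)) p2 q2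
  have hblock : (Matrix.of fun a b => auxOmI Ω M (p1, a) (q1, b))
      = ∑ r, ∑ s, Ω (Matrix.single r s 1) p1 q1 •
          (Matrix.of fun a b => M (r, a) (s, b)) := by
    ext a b
    simp [auxOmI, Matrix.sum_apply]
  rw [hblock, chan_sum h hs]
  rw [Matrix.sum_apply]
  refine Finset.sum_congr rfl fun r _ => ?_
  rw [chan_sum h hs, Matrix.sum_apply]
  refine Finset.sum_congr rfl fun t _ => ?_
  rw [hs]
  simp

lemma auxOmI_psd {Ω : Matrix K K ℂ → Matrix K K ℂ} (hΩ : IsQuantumChannel Ω)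
    {k : ℕ} {M : Matrix (K × Fin k) (K × Fin k) ℂ} (hM : M.PosSemidef) :
    (auxOmI Ω M).PosSemidef := by
  have hM' : (M.submatrix (Prod.swap : Fin k × K → K × Fin k) Prod.swap).PosSemidef :=
    hM.submatrix _
  have h2 := hΩ.2.2.2 k _ hM'
  have h3 : auxOmI Ω M =
      (idTensor Ω (M.submatrix (Prod.swap : Fin k × K → K × Fin k) Prod.swap)).submatrix
        (Prod.swap : K × Fin k → Fin k × K) Prod.swap := by
    ext ⟨i, a⟩ ⟨j, b⟩
    show (∑ r, ∑ s, Ω (Matrix.single r s 1) i j * M (r, a) (s, b))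
      = Ω (Matrix.of fun r s => M (r, a) (s, b)) i j
    rw [chan_eq_sum hΩ.1 hΩ.2.1 (Matrix.of fun r s => M (r, a) (s, b))]
    rw [Matrix.sum_apply]
    refine (Finset.sum_congr rfl fun r _ => ?_).symm
    rw [Matrix.sum_apply]
    refine Finset.sum_congr rfl fun s _ => ?_
    simp [mul_comm]
  rw [h3]
  exact h2.submatrix _

lemma blk_auxOmI {Ω : Matrix K K ℂ → Matrix K K ℂ} (hΩ : IsQuantumChannel Ω)
    (M : Matrix (K × Fin 2) (K × Fin 2) ℂ) (i : Fin 2) :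
    blk i i (auxOmI Ω M) = Ω (blk i i M) := by
  ext a b
  show (∑ r, ∑ s, Ω (Matrix.single r s 1) a b * M (r, i) (s, i)) = Ω (blk i i M) a b
  rw [chan_eq_sum hΩ.1 hΩ.2.1 (blk i i M), Matrix.sum_apply]
  refine (Finset.sum_congr rfl fun r _ => ?_).symm
  rw [Matrix.sum_apply]
  refine Finset.sum_congr rfl fun s _ => ?_
  simp [blk, mul_comm]

lemma blk_psd {M : Matrix (K × Fin 2) (K × Fin 2) ℂ} (hM : M.PosSemidef) (i : Fin 2) :
    (blk i i M).PosSemidef :=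
  hM.submatrix (fun a => (a, i))

lemma blk_trace (M : Matrix (K × Fin 2) (K × Fin 2) ℂ) :
    (blk 0 0 M).trace + (blk 1 1 M).trace = M.trace := by
  show (∑ a, M (a, 0) (a, 0)) + (∑ a, M (a, 1) (a, 1)) = ∑ q : K × Fin 2, M q q
  rw [Fintype.sum_prod_type]
  rw [← Finset.sum_add_distrib]
  refine (Finset.sum_congr rfl fun a _ => ?_).symm
  rw [Fin.sum_univ_two]

lemma idTensor_psd {Φ : Matrix n n ℂ → Matrix n n ℂ} (hΦ : IsQuantumChannel Φ)
    {k : ℕ} {M : Matrix (Fin k × n) (Fin k × n) ℂ} (hM : M.PosSemidef) :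
    (idTensor Φ M).PosSemidef :=
  hΦ.2.2.2 k M hM

lemma channel_psd {Φ : Matrix n n ℂ → Matrix n n ℂ} (hΦ : IsQuantumChannel Φ)
    {ρ : Matrix n n ℂ} (hρ : ρ.PosSemidef) : (Φ ρ).PosSemidef := by
  have h1 : (ρ.submatrix (Prod.snd : Fin 1 × n → n) Prod.snd).PosSemidef := hρ.submatrix _
  have h2 := hΦ.2.2.2 1 _ h1
  have h3 : idTensor Φ (ρ.submatrix (Prod.snd : Fin 1 × n → n) Prod.snd)
      = (Φ ρ).submatrix (Prod.snd : Fin 1 × n → n) Prod.snd := by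
    ext ⟨i, a⟩ ⟨j, b⟩
    show Φ (Matrix.of fun a b => ρ a b) a b = Φ ρ a b
    rfl
  rw [h3] at h2
  have h4 : Φ ρ = ((Φ ρ).submatrix (Prod.snd : Fin 1 × n → n) Prod.snd).submatrix
      (fun a => ((0 : Fin 1), a)) (fun a => ((0 : Fin 1), a)) := rfl
  rw [h4]
  exact h2.submatrix _

lemma trace_idTensor {Φ : Matrix n n ℂ → Matrix n n ℂ}
    (htr : ∀ A, (Φ A).trace = A.trace)
    {k : ℕ} (M : Matrix (Fin k × n) (Fin k × n) ℂ) :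
    (idTensor Φ M).trace = M.trace := by
  show (∑ q : Fin k × n, idTensor Φ M q q) = ∑ q : Fin k × n, M q q
  rw [Fintype.sum_prod_type, Fintype.sum_prod_type]
  refine Finset.sum_congr rfl fun i _ => ?_
  have h := htr (Matrix.of fun a b => M (i, a) (i, b))
  simpa [Matrix.trace, Matrix.diag, idTensor] using h

lemma trace_auxOmI {Ω : Matrix K K ℂ → Matrix K K ℂ} (hΩ : IsQuantumChannel Ω)
    {k : ℕ} (M : Matrix (K × Fin k) (K × Fin k) ℂ) :
    (auxOmI Ω M).trace = M.trace := by
  have hδ : ∀ r s : K, (∑ i, Ω (Matrix.single r s 1) i i)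
      = if r = s then 1 else 0 := by
    intro r s
    have h1 : (∑ i, Ω (Matrix.single r s 1) i i)
        = (Ω (Matrix.single r s 1)).trace := rfl
    rw [h1, hΩ.2.2.1]
    by_cases hrs : r = s
    · subst hrs
      rw [Matrix.trace_single_eq_same, if_pos rfl]
    · rw [Matrix.trace_single_eq_of_ne _ _ _ hrs, if_neg hrs]
  show (∑ q : K × Fin k, auxOmI Ω M q q) = ∑ q : K × Fin k, M q q
  have step1 : (∑ q : K × Fin k, auxOmI Ω M q q)
      = ∑ w : K × K, ∑ q : K × Fin k,
          Ω (Matrix.single w.1 w.2 1) q.1 q.1 * M (w.1, q.2) (w.2, q.2) := by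
    rw [← Finset.sum_comm]
    refine Finset.sum_congr rfl fun q _ => ?_
    show (∑ r, ∑ s, Ω (Matrix.single r s 1) q.1 q.1 * M (r, q.2) (s, q.2)) = _
    rw [Fintype.sum_prod_type]
  rw [step1]
  have step2 : ∀ w : K × K, (∑ q : K × Fin k,
        Ω (Matrix.single w.1 w.2 1) q.1 q.1 * M (w.1, q.2) (w.2, q.2))
      = (if w.1 = w.2 then (1 : ℂ) else 0) * (∑ a, M (w.1, a) (w.2, a)) := by
    intro w
    rw [Fintype.sum_prod_type, ← hδ w.1 w.2, Finset.sum_mul]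
    refine Finset.sum_congr rfl fun i _ => ?_
    rw [Finset.mul_sum]
  rw [Finset.sum_congr rfl fun w _ => step2 w]
  rw [Fintype.sum_prod_type, Fintype.sum_prod_type]
  refine Finset.sum_congr rfl fun r _ => ?_
  simp

lemma psd_smul_real {A : Matrix n n ℂ} (hA : A.PosSemidef) {c : ℝ} (hc : 0 ≤ c) :
    ((c : ℂ) • A).PosSemidef :=
  hA.smul (by exact_mod_cast hc)

lemma psd_kron {A : Matrix K K ℂ} {B : Matrix n n ℂ} (hA : A.PosSemidef) (hB : B.PosSemidef) :
    (A ⊗ₖ B).PosSemidef :=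
  hA.kronecker hB

lemma tensorFun_kron {Ω : Matrix K K ℂ → Matrix K K ℂ} {Φ : Matrix n n ℂ → Matrix n n ℂ}
    (hΩ : IsQuantumChannel Ω) (hΦ : IsQuantumChannel Φ)
    (ρ : Matrix K K ℂ) (σ : Matrix n n ℂ) :
    tensorFun Ω Φ (ρ ⊗ₖ σ) = (Ω ρ) ⊗ₖ (Φ σ) := by
  ext ⟨p1, p2⟩ ⟨q1, q2⟩
  show (∑ r, ∑ s, Ω (Matrix.single r s 1) p1 q1 *
      Φ (Matrix.of fun a b => (ρ ⊗ₖ σ) (r, a) (s, b)) p2 q2)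
    = Ω ρ p1 q1 * Φ σ p2 q2
  have hblock : ∀ r s : K, (Matrix.of fun a b => (ρ ⊗ₖ σ) (r, a) (s, b)) = ρ r s • σ := by
    intro r s
    ext a b
    simp [Matrix.kroneckerMap_apply]
  have step : ∀ r s : K, Ω (Matrix.single r s 1) p1 q1 *
      Φ (Matrix.of fun a b => (ρ ⊗ₖ σ) (r, a) (s, b)) p2 q2
      = (ρ r s • Ω (Matrix.single r s 1)) p1 q1 * Φ σ p2 q2 := by
    intro r s
    rw [hblock, hΦ.2.1]
    simp [Matrix.smul_apply]
    ring
  rw [Finset.sum_congr rfl fun r _ => Finset.sum_congr rfl fun s _ => step r s]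
  have h2 : (∑ r, ∑ s, (ρ r s • Ω (Matrix.single r s 1)) p1 q1 * Φ σ p2 q2)
      = (∑ r, ∑ s, ρ r s • Ω (Matrix.single r s 1)) p1 q1 * Φ σ p2 q2 := by
    rw [Matrix.sum_apply, Finset.sum_mul]
    refine Finset.sum_congr rfl fun r _ => ?_
    rw [Matrix.sum_apply, Finset.sum_mul]
  rw [h2, ← chan_eq_sum hΩ.1 hΩ.2.1 ρ]

lemma isState_uniform (n : Type*) [Fintype n] [DecidableEq n] [Nonempty n] :
    IsState ((((Fintype.card n : ℝ)⁻¹ : ℝ) : ℂ) • (1 : Matrix n n ℂ)) := by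
  have hcard : (Fintype.card n : ℝ) ≠ 0 := by
    exact_mod_cast Fintype.card_ne_zero
  refine ⟨psd_smul_real Matrix.PosSemidef.one (by positivity), ?_⟩
  rw [Matrix.trace_smul, Matrix.trace_one, smul_eq_mul]
  push_cast
  field_simp

lemma schattenNorm_zero {p : ℝ} (hp : 1 ≤ p) : schattenNorm p (0 : Matrix n n ℂ) = 0 := by
  have h : traceAbsPow p (0 : Matrix n n ℂ) = 0 := by
    have hdec : (0 : Matrix n n ℂ) = ((1 : Matrix.unitaryGroup n ℂ) : Matrix n n ℂ) *
        Matrix.diagonal (fun _ : n => ((0 : ℝ) : ℂ)) *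
        star ((1 : Matrix.unitaryGroup n ℂ) : Matrix n n ℂ) := by
      simp
    rw [traceAbsPow_eq 1 (fun _ => 0) (fun _ => le_refl 0) hdec]
    simp [Real.zero_rpow (by positivity : p ≠ 0)]
  rw [schattenNorm, h, Real.zero_rpow (by positivity : (1:ℝ)/p ≠ 0)]

-- bddAbove for channel-type maps
lemma bddAbove_channelSet {m : Type*} [Fintype m] [DecidableEq m] [Nonempty m] {p : ℝ}
    (hp : 1 ≤ p) (Φ : Matrix n n ℂ → Matrix m m ℂ)
    (h : ∀ ρ : Matrix n n ℂ, IsState ρ → (Φ ρ).PosSemidef ∧ (Φ ρ).trace = 1) :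
    BddAbove {x | ∃ ρ, IsState ρ ∧ x = schattenNorm p (Φ ρ)} := by
  refine ⟨(Fintype.card m : ℝ), ?_⟩
  rintro x ⟨ρ, hρ, rfl⟩
  exact schattenNorm_le_card hp (h ρ hρ).1 (h ρ hρ).2

lemma le_maxPNorm {m : Type*} [Fintype m] [DecidableEq m] {p : ℝ}
    {Φ : Matrix n n ℂ → Matrix m m ℂ}
    (hbdd : BddAbove {x | ∃ ρ, IsState ρ ∧ x = schattenNorm p (Φ ρ)})
    {ρ : Matrix n n ℂ} (hρ : IsState ρ) :
    schattenNorm p (Φ ρ) ≤ maxPNorm p Φ :=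
  le_csSup hbdd ⟨ρ, hρ, rfl⟩

lemma maxPNorm_nonneg' {m : Type*} [Fintype m] [DecidableEq m] [Nonempty n] {p : ℝ}
    {Φ : Matrix n n ℂ → Matrix m m ℂ}
    (hbdd : BddAbove {x | ∃ ρ, IsState ρ ∧ x = schattenNorm p (Φ ρ)}) :
    0 ≤ maxPNorm p Φ :=
  le_trans (schattenNorm_nonneg _ _) (le_maxPNorm hbdd (isState_uniform n))

lemma norm_apply_psd_le [Nonempty n] {p : ℝ} (hp : 1 ≤ p)
    {Φ : Matrix n n ℂ → Matrix n n ℂ} (hΦ : IsQuantumChannel Φ)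
    (hbdd : BddAbove {x | ∃ ρ, IsState ρ ∧ x = schattenNorm p (Φ ρ)})
    {X : Matrix n n ℂ} (hX : X.PosSemidef) :
    schattenNorm p (Φ X) ≤ maxPNorm p Φ * X.trace.re := by
  rcases eq_or_lt_of_le (psd_trace_re_nonneg hX) with h0 | hpos
  · have hX0 : X = 0 := by
      refine psd_of_trace_zero hX ?_
      rw [psd_trace_eq_re hX, ← h0]
      simp
    rw [hX0, chan_zero hΦ.2.1, schattenNorm_zero hp]
    simp
  · have hρpsd : (((X.trace.re⁻¹ : ℝ) : ℂ) • X).PosSemidef :=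
      psd_smul_real hX (inv_nonneg.mpr hpos.le)
    have hρstate : IsState (((X.trace.re⁻¹ : ℝ) : ℂ) • X) := by
      refine ⟨hρpsd, ?_⟩
      rw [Matrix.trace_smul, smul_eq_mul, psd_trace_eq_re hX]
      push_cast
      field_simp
      rw [Complex.ofReal_re]
      exact div_self (by exact_mod_cast hpos.ne')
    have hXρ : Φ X = (X.trace.re : ℂ) • Φ (((X.trace.re⁻¹ : ℝ) : ℂ) • X) := by
      rw [← hΦ.2.1 (X.trace.re : ℂ) _]
      congr 1
      rw [smul_smul, show ((X.trace.re : ℂ) * ((X.trace.re⁻¹ : ℝ) : ℂ)) = 1 by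
        push_cast; field_simp, one_smul]
    rw [hXρ, schattenNorm_smul hp (channel_psd hΦ hρpsd) hpos.le]
    calc X.trace.re * schattenNorm p (Φ (((X.trace.re⁻¹ : ℝ) : ℂ) • X))
        = schattenNorm p (Φ (((X.trace.re⁻¹ : ℝ) : ℂ) • X)) * X.trace.re := mul_comm _ _
      _ ≤ maxPNorm p Φ * X.trace.re :=
          mul_le_mul_of_nonneg_right (le_maxPNorm hbdd hρstate) hpos.le

end Stage3

end AuxProof

/-- Corollary 1. Let `Φ` be a qubit channel, `K ≥ 1`, `p ≥ 1`, and suppose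
that for every positive semidefinite `2K × 2K` matrix `M = [[X, Y], [Yᴴ, Z]]` one has
`‖(I_K ⊗ Φ)(M)‖_p ≤ ν_p(Φ)(‖X‖_p + ‖Z‖_p)`. Then for every completely positive
trace-preserving map `Ω` on `M_K(ℂ)`, `ν_p(Ω ⊗ Φ) = ν_p(Ω) · ν_p(Φ)`. -/
theorem halfNoisy_bound_implies_multiplicativity (K : ℕ) (hK : 1 ≤ K) (p : ℝ) (hp : 1 ≤ p)
    (Φ : Matrix (Fin 2) (Fin 2) ℂ → Matrix (Fin 2) (Fin 2) ℂ) (hΦ : IsQuantumChannel Φ)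
    (hbound : ∀ M : Matrix (Fin K × Fin 2) (Fin K × Fin 2) ℂ, M.PosSemidef →
      schattenNorm p (idTensor Φ M) ≤
        maxPNorm p Φ * (schattenNorm p (blk 0 0 M) + schattenNorm p (blk 1 1 M)))
    (Ω : Matrix (Fin K) (Fin K) ℂ → Matrix (Fin K) (Fin K) ℂ) (hΩ : IsQuantumChannel Ω) :
    maxPNorm p (tensorFun Ω Φ) = maxPNorm p Ω * maxPNorm p Φ := by
  classical
  have hKne : Nonempty (Fin K) := ⟨⟨0, hK⟩⟩
  open AuxProof in
  -- basic channel facts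
  have hΦstate : ∀ ρ : Matrix (Fin 2) (Fin 2) ℂ, IsState ρ → (Φ ρ).PosSemidef ∧ (Φ ρ).trace = 1 :=
    fun ρ hρ => ⟨channel_psd hΦ hρ.1, by rw [hΦ.2.2.1, hρ.2]⟩
  have hΩstate : ∀ ρ : Matrix (Fin K) (Fin K) ℂ, IsState ρ → (Ω ρ).PosSemidef ∧ (Ω ρ).trace = 1 :=
    fun ρ hρ => ⟨channel_psd hΩ hρ.1, by rw [hΩ.2.2.1, hρ.2]⟩
  have hT : ∀ ρ : Matrix (Fin K × Fin 2) (Fin K × Fin 2) ℂ,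
      tensorFun Ω Φ ρ = idTensor Φ (auxOmI Ω ρ) :=
    fun ρ => tensorFun_eq Ω hΦ.1 hΦ.2.1 ρ
  have hTstate : ∀ ρ : Matrix (Fin K × Fin 2) (Fin K × Fin 2) ℂ, IsState ρ →
      (tensorFun Ω Φ ρ).PosSemidef ∧ (tensorFun Ω Φ ρ).trace = 1 := by
    intro ρ hρ
    rw [hT ρ]
    exact ⟨idTensor_psd hΦ (auxOmI_psd hΩ hρ.1),
      by rw [trace_idTensor hΦ.2.2.1, trace_auxOmI hΩ, hρ.2]⟩
  have hbddΦ : BddAbove {x | ∃ ρ, IsState ρ ∧ x = schattenNorm p (Φ ρ)} :=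
    bddAbove_channelSet hp Φ hΦstate
  have hbddΩ : BddAbove {x | ∃ ρ, IsState ρ ∧ x = schattenNorm p (Ω ρ)} :=
    bddAbove_channelSet hp Ω hΩstate
  have hbddT : BddAbove {x | ∃ ρ, IsState ρ ∧ x = schattenNorm p (tensorFun Ω Φ ρ)} :=
    bddAbove_channelSet hp (tensorFun Ω Φ) hTstate
  have hνΦ0 : 0 ≤ maxPNorm p Φ := maxPNorm_nonneg' hbddΦ
  have hνΩ0 : 0 ≤ maxPNorm p Ω := maxPNorm_nonneg' hbddΩ
  have hC0 : 0 ≤ maxPNorm p (tensorFun Ω Φ) := maxPNorm_nonneg' hbddT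
  -- upper bound
  have hub : maxPNorm p (tensorFun Ω Φ) ≤ maxPNorm p Ω * maxPNorm p Φ := by
    apply Real.sSup_le
    · rintro x ⟨ρ, hρ, rfl⟩
      rw [hT ρ]
      have hN : (auxOmI Ω ρ).PosSemidef := auxOmI_psd hΩ hρ.1
      have h2 := hbound (auxOmI Ω ρ) hN
      have hblk0 : blk 0 0 (auxOmI Ω ρ) = Ω (blk 0 0 ρ) := blk_auxOmI hΩ ρ 0
      have hblk1 : blk 1 1 (auxOmI Ω ρ) = Ω (blk 1 1 ρ) := blk_auxOmI hΩ ρ 1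
      have h3 : schattenNorm p (Ω (blk 0 0 ρ)) ≤ maxPNorm p Ω * (blk 0 0 ρ).trace.re :=
        norm_apply_psd_le hp hΩ hbddΩ (blk_psd hρ.1 0)
      have h4 : schattenNorm p (Ω (blk 1 1 ρ)) ≤ maxPNorm p Ω * (blk 1 1 ρ).trace.re :=
        norm_apply_psd_le hp hΩ hbddΩ (blk_psd hρ.1 1)
      have htr : (blk 0 0 ρ).trace.re + (blk 1 1 ρ).trace.re = 1 := by
        have := blk_trace ρ
        rw [hρ.2] at this
        have := congrArg Complex.re this
        simpa using this
      rw [hblk0, hblk1] at h2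
      calc schattenNorm p (idTensor Φ (auxOmI Ω ρ))
          ≤ maxPNorm p Φ * (schattenNorm p (Ω (blk 0 0 ρ)) + schattenNorm p (Ω (blk 1 1 ρ))) := h2
        _ ≤ maxPNorm p Φ * (maxPNorm p Ω * (blk 0 0 ρ).trace.re
              + maxPNorm p Ω * (blk 1 1 ρ).trace.re) := by
            apply mul_le_mul_of_nonneg_left _ hνΦ0
            exact add_le_add h3 h4
        _ = maxPNorm p Ω * maxPNorm p Φ * ((blk 0 0 ρ).trace.re + (blk 1 1 ρ).trace.re) := by
            ring
        _ = maxPNorm p Ω * maxPNorm p Φ := by rw [htr, mul_one]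
    · exact mul_nonneg hνΩ0 hνΦ0
  -- lower bound
  have hlb : maxPNorm p Ω * maxPNorm p Φ ≤ maxPNorm p (tensorFun Ω Φ) := by
    have key : ∀ x ∈ {x | ∃ ρ, IsState ρ ∧ x = schattenNorm p (Ω ρ)},
        ∀ y ∈ {x | ∃ ρ, IsState ρ ∧ x = schattenNorm p (Φ ρ)},
        x * y ≤ maxPNorm p (tensorFun Ω Φ) := by
      rintro x ⟨ρ, hρ, rfl⟩ y ⟨σ, hσ, rfl⟩
      have heq : schattenNorm p (Ω ρ) * schattenNorm p (Φ σ)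
          = schattenNorm p (tensorFun Ω Φ (ρ ⊗ₖ σ)) := by
        rw [tensorFun_kron hΩ hΦ ρ σ,
          schattenNorm_kron (channel_psd hΩ hρ.1) (channel_psd hΦ hσ.1)]
      rw [heq]
      refine le_csSup hbddT ⟨ρ ⊗ₖ σ, ⟨psd_kron hρ.1 hσ.1, ?_⟩, rfl⟩
      rw [Matrix.trace_kronecker, hρ.2, hσ.2, mul_one]
    have step1 : ∀ x ∈ {x | ∃ ρ, IsState ρ ∧ x = schattenNorm p (Ω ρ)},
        x * maxPNorm p Φ ≤ maxPNorm p (tensorFun Ω Φ) := by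
      intro x hx
      have hx0 : 0 ≤ x := by
        obtain ⟨ρ, hρ, rfl⟩ := hx
        exact schattenNorm_nonneg _ _
      rcases eq_or_lt_of_le hx0 with h | h
      · rw [← h, zero_mul]
        exact hC0
      · rw [mul_comm, ← le_div_iff₀ h]
        apply Real.sSup_le
        · intro y hy
          rw [le_div_iff₀ h, mul_comm]
          exact key x hx y hy
        · positivity
    rcases eq_or_lt_of_le hνΦ0 with h | h
    · rw [← h, mul_zero]
      exact hC0
    · rw [← le_div_iff₀ h]
      apply Real.sSup_le
      · intro x hx
        rw [le_div_iff₀ h]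
        exact step1 x hx
      · exact div_nonneg hC0 h.le
  exact le_antisymm hub hlb
end

section
/- Let M be a positive semidefinite 2K×2K matrix written in K×K blocks as M = [[X, Y],[Y*, Z]]. Then for every p ≥ 1, ||M||_p ≤ ||X||_p + ||Z||_p. -/
open scoped Kronecker ComplexOrder
open Matrix

section MyAuxSchatten

open Polynomial

set_option linter.unusedSectionVars false
set_option linter.unusedVariables false

variable {n m : Type*} [Fintype n] [DecidableEq n] [Fintype m] [DecidableEq m]

lemma my_charmatrix_diagonal (c : n → ℂ) :
    charmatrix (Matrix.diagonal c) = Matrix.diagonal (fun i => (X : ℂ[X]) - C (c i)) := by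
  ext i j
  by_cases h : i = j
  · subst h; rw [charmatrix_apply_eq, diagonal_apply_eq, diagonal_apply_eq]
  · rw [charmatrix_apply_ne _ _ _ h, diagonal_apply_ne _ h, diagonal_apply_ne _ h, C_0, neg_zero]

lemma my_charpoly_diagonal (c : n → ℂ) :
    (Matrix.diagonal c).charpoly = ∏ i, ((X : ℂ[X]) - C (c i)) := by
  rw [Matrix.charpoly, my_charmatrix_diagonal, det_diagonal]

lemma my_charpoly_conj (U V A : Matrix n n ℂ) (h1 : U * V = 1) :
    (U * A * V).charpoly = A.charpoly := by
  have h1C : U.map (C : ℂ → ℂ[X]) * V.map (C : ℂ → ℂ[X]) = 1 := by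
    rw [← Matrix.map_mul, h1]
    ext i j; by_cases h : i = j <;> simp [Matrix.one_apply, h]
  have key : charmatrix (U * A * V) =
      U.map (C : ℂ → ℂ[X]) * charmatrix A * V.map (C : ℂ → ℂ[X]) := by
    unfold charmatrix
    rw [mul_sub, sub_mul]
    congr 1
    · rw [Matrix.scalar_apply, ← Matrix.smul_one_eq_diagonal, Matrix.mul_smul,
        Matrix.smul_mul, mul_one, h1C]
    · simp only [RingHom.mapMatrix_apply]
      rw [← Matrix.map_mul, ← Matrix.map_mul]
  rw [Matrix.charpoly, key, det_mul, det_mul, Matrix.charpoly]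
  have hd : (U.map (C : ℂ → ℂ[X])).det * (V.map (C : ℂ → ℂ[X])).det = 1 := by
    rw [← det_mul, h1C, det_one]
  calc (U.map (C : ℂ → ℂ[X])).det * (charmatrix A).det * (V.map (C : ℂ → ℂ[X])).det
      = (charmatrix A).det * ((U.map (C : ℂ → ℂ[X])).det * (V.map (C : ℂ → ℂ[X])).det) := by ring
    _ = (charmatrix A).det := by rw [hd, mul_one]

lemma my_charpoly_mul_comm (A B : Matrix n n ℂ) :
    (A * B).charpoly = (B * A).charpoly := by
  classical
  let J : Matrix (n ⊕ n) (n ⊕ n) ℂ := fromBlocks 1 A 0 1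
  let J' : Matrix (n ⊕ n) (n ⊕ n) ℂ := fromBlocks 1 (-A) 0 1
  have hJ : J * J' = 1 := by
    simp [J, J', fromBlocks_multiply, fromBlocks_one]
  have hE : J * (fromBlocks 0 0 B (B * A)) * J' = fromBlocks (A * B) 0 B 0 := by
    simp [J, J', fromBlocks_multiply, Matrix.mul_assoc]
  have h := my_charpoly_conj J J' (fromBlocks 0 0 B (B * A)) hJ
  rw [hE] at h
  rw [Matrix.charpoly_fromBlocks_zero₁₂, Matrix.charpoly_fromBlocks_zero₁₂] at h
  have h0 : (0 : Matrix n n ℂ).charpoly ≠ 0 := (Matrix.charpoly_monic _).ne_zero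
  exact mul_right_cancel₀ h0 (by rw [h, mul_comm])

/-- charpoly of a Hermitian matrix as product over eigenvalues. -/
lemma my_charpoly_hermitian {A : Matrix n n ℂ} (hA : A.IsHermitian) :
    A.charpoly = ∏ i, ((X : ℂ[X]) - C ((hA.eigenvalues i : ℂ))) := by
  have hU := (hA.eigenvectorUnitary).2
  have h1 : (hA.eigenvectorUnitary : Matrix n n ℂ) * star (hA.eigenvectorUnitary : Matrix n n ℂ) = 1 :=
    (Matrix.mem_unitaryGroup_iff).mp hU
  conv_lhs => rw [hA.spectral_theorem, Unitary.conjStarAlgAut_apply]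
  rw [my_charpoly_conj _ _ _ h1, my_charpoly_diagonal]
  rfl


lemma my_sum_of_multiset_eq {f : ℝ → ℝ} {a : n → ℝ} {b : m → ℝ}
    (h : Multiset.map a Finset.univ.val = Multiset.map b Finset.univ.val) :
    ∑ i, f (a i) = ∑ i, f (b i) := by
  have h2 : Multiset.map f (Multiset.map a Finset.univ.val)
      = Multiset.map f (Multiset.map b Finset.univ.val) := by rw [h]
  rw [Multiset.map_map, Multiset.map_map] at h2
  calc ∑ i, f (a i) = (Multiset.map (f ∘ a) Finset.univ.val).sum := by
        rw [Finset.sum_eq_multiset_sum]; rfl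
    _ = (Multiset.map (f ∘ b) Finset.univ.val).sum := by rw [h2]
    _ = ∑ i, f (b i) := by rw [Finset.sum_eq_multiset_sum]; rfl

lemma my_roots_prod {k : Type*} [Fintype k] (c : k → ℝ) :
    (∏ i, ((X : ℂ[X]) - C ((c i : ℂ)))).roots
      = Multiset.map (fun i => (c i : ℂ)) Finset.univ.val := by
  rw [Finset.prod_eq_multiset_prod,
    ← roots_multiset_prod_X_sub_C (Multiset.map (fun i => (c i : ℂ)) Finset.univ.val),
    Multiset.map_map]
  rfl

lemma my_multiset_of_prod_eq {a : n → ℝ} {b : m → ℝ}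
    (h : ∏ i, ((X : ℂ[X]) - C ((a i : ℂ))) = ∏ j, ((X : ℂ[X]) - C ((b j : ℂ)))) :
    Multiset.map a Finset.univ.val = Multiset.map b Finset.univ.val := by
  have h2 : Multiset.map (fun i => (a i : ℂ)) Finset.univ.val
      = Multiset.map (fun j => (b j : ℂ)) Finset.univ.val := by
    rw [← my_roots_prod a, ← my_roots_prod b, h]
  apply Multiset.map_injective Complex.ofReal_injective
  rw [Multiset.map_map, Multiset.map_map]
  exact h2

/-- Spectral decomposition data: A = U * diagonal d * star U with U unitary gives
the eigenvalue multiset. -/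
lemma my_eig_of_decomp {A : Matrix n n ℂ} (hA : A.IsHermitian)
    (U : Matrix n n ℂ) (hU : U ∈ Matrix.unitaryGroup n ℂ) (d : n → ℝ)
    (hdec : A = U * Matrix.diagonal (fun i => (d i : ℂ)) * star U) :
    Multiset.map hA.eigenvalues Finset.univ.val = Multiset.map d Finset.univ.val := by
  have hWU := (hA.eigenvectorUnitary).2
  have e1 : A.charpoly = ∏ i, ((X : ℂ[X]) - C ((hA.eigenvalues i : ℂ))) := by
    conv_lhs => rw [hA.spectral_theorem, Unitary.conjStarAlgAut_apply]
    rw [my_charpoly_conj _ _ _ ((Matrix.mem_unitaryGroup_iff).mp hWU), my_charpoly_diagonal]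
    rfl
  have e2 : A.charpoly = ∏ i, ((X : ℂ[X]) - C ((d i : ℂ))) := by
    conv_lhs => rw [hdec]
    rw [my_charpoly_conj _ _ _ ((Matrix.mem_unitaryGroup_iff).mp hU), my_charpoly_diagonal]
  exact my_multiset_of_prod_eq (e1.symm.trans e2)

lemma my_traceAbsPow_psd (p : ℝ) (hp : 0 < p) {A : Matrix n n ℂ} (hA : A.PosSemidef) :
    traceAbsPow p A = ∑ i, hA.1.eigenvalues i ^ p := by
  set W : Matrix n n ℂ := (hA.1.eigenvectorUnitary : Matrix n n ℂ) with hWdef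
  have hW : W ∈ Matrix.unitaryGroup n ℂ := (hA.1.eigenvectorUnitary).2
  have hmm' : star W * W = 1 := (Matrix.mem_unitaryGroup_iff').mp hW
  have key : ∀ (D : Matrix n n ℂ), (W * D * star W) * (W * D * star W) = W * (D * D) * star W := by
    intro D
    calc (W * D * star W) * (W * D * star W)
        = W * D * (star W * W) * D * star W := by simp only [Matrix.mul_assoc]
      _ = W * (D * D) * star W := by
          rw [hmm']
          simp only [Matrix.mul_one, Matrix.one_mul, Matrix.mul_assoc]
  have hdec : Aᴴ * A = W * Matrix.diagonal
      (fun i => ((hA.1.eigenvalues i * hA.1.eigenvalues i : ℝ) : ℂ)) * star W := by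
    rw [hA.1]
    conv_lhs => rw [hA.1.spectral_theorem, Unitary.conjStarAlgAut_apply, ← hWdef]
    rw [key, diagonal_mul_diagonal]
    congr 2
    funext i
    simp only [Function.comp_apply, RCLike.ofReal_mul]
    push_cast
    rfl
  have hmul := my_eig_of_decomp (Matrix.posSemidef_conjTranspose_mul_self A).1 W hW _ hdec
  rw [traceAbsPow, my_sum_of_multiset_eq (f := fun x => x ^ (p / 2)) hmul]
  apply Finset.sum_congr rfl
  intro i _
  have h0 : 0 ≤ hA.1.eigenvalues i := hA.eigenvalues_nonneg i
  have h2 : hA.1.eigenvalues i * hA.1.eigenvalues i = hA.1.eigenvalues i ^ (2 : ℝ) := by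
    rw [show (2:ℝ) = ((2:ℕ):ℝ) by norm_num, Real.rpow_natCast, sq]
  rw [h2, ← Real.rpow_mul h0]
  congr 1
  ring

/-- Trace formula for a product of two conjugated diagonal matrices. -/
lemma my_trace_formula (d e : n → ℝ) (U V : Matrix n n ℂ) :
    ((U * Matrix.diagonal (fun i => (d i : ℂ)) * star U) *
      (V * Matrix.diagonal (fun i => (e i : ℂ)) * star V)).trace
    = ((∑ i, ∑ j, d i * e j * Complex.normSq ((star U * V) i j) : ℝ) : ℂ) := by
  set G : Matrix n n ℂ := star U * V with hG
  have hsG : star G = star V * U := by rw [hG, StarMul.star_mul, star_star]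
  set D : Matrix n n ℂ := Matrix.diagonal (fun i => (d i : ℂ))
  set E : Matrix n n ℂ := Matrix.diagonal (fun i => (e i : ℂ))
  have h1 : (U * D * star U) * (V * E * star V) = U * ((D * G * E) * star V) := by
    rw [hG]; simp only [Matrix.mul_assoc]
  rw [h1, Matrix.trace_mul_comm, Matrix.mul_assoc, ← hsG]
  rw [show (D * G * E) * star G = D * (G * E * star G) by simp only [Matrix.mul_assoc]]
  rw [Matrix.trace]
  push_cast
  apply Finset.sum_congr rfl
  intro i _
  rw [Matrix.diag]
  rw [Matrix.diagonal_mul]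
  rw [Matrix.mul_apply]
  rw [Finset.mul_sum]
  apply Finset.sum_congr rfl
  intro j _
  rw [Matrix.mul_apply]  -- (G*E) i j
  rw [Finset.sum_eq_single j (fun x _ hx => by
    simp [E, Matrix.diagonal_apply_ne _ hx]) (by simp)]
  rw [show E j j = (e j : ℂ) from Matrix.diagonal_apply_eq _ j]
  have hst : star G j i = (starRingEnd ℂ) (G i j) := by
    rw [Matrix.star_eq_conjTranspose, Matrix.conjTranspose_apply]; rfl
  rw [hst]
  rw [show G i j * (e j : ℂ) * (starRingEnd ℂ) (G i j)
      = (e j : ℂ) * (G i j * (starRingEnd ℂ) (G i j)) by ring, Complex.mul_conj]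
  ring

/-- Rows of |G|² sum to 1 for unitary G. -/
lemma my_row_sum {G : Matrix n n ℂ} (hG : G * star G = 1) (i : n) :
    ∑ j, Complex.normSq (G i j) = 1 := by
  have h := congrArg (fun M : Matrix n n ℂ => M i i) hG
  simp only [Matrix.mul_apply, Matrix.one_apply_eq] at h
  have : ∀ j, G i j * star G j i = ((Complex.normSq (G i j) : ℝ) : ℂ) := by
    intro j
    rw [Matrix.star_eq_conjTranspose, Matrix.conjTranspose_apply,
      show star (G i j) = (starRingEnd ℂ) (G i j) from rfl, Complex.mul_conj]
  rw [Finset.sum_congr rfl (fun j _ => this j)] at h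
  exact_mod_cast h

lemma my_col_sum {G : Matrix n n ℂ} (hG : star G * G = 1) (j : n) :
    ∑ i, Complex.normSq (G i j) = 1 := by
  have h := congrArg (fun M : Matrix n n ℂ => M j j) hG
  simp only [Matrix.mul_apply, Matrix.one_apply_eq] at h
  have : ∀ i, star G j i * G i j = ((Complex.normSq (G i j) : ℝ) : ℂ) := by
    intro i
    rw [Matrix.star_eq_conjTranspose, Matrix.conjTranspose_apply,
      show star (G i j) = (starRingEnd ℂ) (G i j) from rfl, mul_comm, Complex.mul_conj]
  rw [Finset.sum_congr rfl (fun i _ => this i)] at h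
  exact_mod_cast h

/-- Weighted Hölder for doubly stochastic weights. -/
lemma my_holder {p q : ℝ} (hpq : p.HolderConjugate q) (w : n → m → ℝ)
    (hw : ∀ i j, 0 ≤ w i j) (hrow : ∀ i, ∑ j, w i j = 1) (hcol : ∀ j, ∑ i, w i j = 1)
    (x : n → ℝ) (y : m → ℝ) (hx : ∀ i, 0 ≤ x i) (hy : ∀ j, 0 ≤ y j) :
    ∑ i, ∑ j, x i * y j * w i j
      ≤ (∑ i, x i ^ q) ^ (1 / q) * (∑ j, y j ^ p) ^ (1 / p) := by
  have hq1 : (1:ℝ) < q := hpq.symm.lt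
  have hp0 : (0:ℝ) < p := hpq.pos
  have hq0 : (0:ℝ) < q := hpq.symm.pos
  -- Hölder on the product index set
  have key := Real.inner_le_Lp_mul_Lq_of_nonneg (Finset.univ ×ˢ Finset.univ)
    hpq.symm
    (f := fun ij : n × m => x ij.1 * w ij.1 ij.2 ^ (1/q))
    (g := fun ij : n × m => y ij.2 * w ij.1 ij.2 ^ (1/p))
    (fun ij _ => mul_nonneg (hx _) (Real.rpow_nonneg (hw _ _) _))
    (fun ij _ => mul_nonneg (hy _) (Real.rpow_nonneg (hw _ _) _))
  have hsum1 : 1/q + 1/p = 1 := by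
    rw [one_div, one_div, add_comm]; exact hpq.inv_add_inv_eq_one
  have e1 : ∀ ij : n × m, (x ij.1 * w ij.1 ij.2 ^ (1/q)) * (y ij.2 * w ij.1 ij.2 ^ (1/p))
      = x ij.1 * y ij.2 * w ij.1 ij.2 := by
    intro ij
    rw [show (x ij.1 * w ij.1 ij.2 ^ (1/q)) * (y ij.2 * w ij.1 ij.2 ^ (1/p))
        = x ij.1 * y ij.2 * (w ij.1 ij.2 ^ (1/q) * w ij.1 ij.2 ^ (1/p)) by ring,
      ← Real.rpow_add' (hw _ _) (by rw [hsum1]; norm_num), hsum1, Real.rpow_one]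
  have e2 : ∀ ij : n × m, (x ij.1 * w ij.1 ij.2 ^ (1/q)) ^ q = x ij.1 ^ q * w ij.1 ij.2 := by
    intro ij
    rw [Real.mul_rpow (hx _) (Real.rpow_nonneg (hw _ _) _), ← Real.rpow_mul (hw _ _),
      one_div, inv_mul_cancel₀ hq0.ne', Real.rpow_one]
  have e3 : ∀ ij : n × m, (y ij.2 * w ij.1 ij.2 ^ (1/p)) ^ p = y ij.2 ^ p * w ij.1 ij.2 := by
    intro ij
    rw [Real.mul_rpow (hy _) (Real.rpow_nonneg (hw _ _) _), ← Real.rpow_mul (hw _ _),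
      one_div, inv_mul_cancel₀ hp0.ne', Real.rpow_one]
  simp only [e1, e2, e3] at key
  rw [Finset.sum_product] at key
  have s2 : ∑ ij ∈ Finset.univ ×ˢ Finset.univ, x ij.1 ^ q * w ij.1 ij.2 = ∑ i, x i ^ q := by
    rw [Finset.sum_product]
    apply Finset.sum_congr rfl
    intro i _
    show ∑ j, x i ^ q * w i j = x i ^ q
    rw [← Finset.mul_sum, hrow i, mul_one]
  have s3 : ∑ ij ∈ Finset.univ ×ˢ Finset.univ, y ij.2 ^ p * w ij.1 ij.2 = ∑ j, y j ^ p := by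
    rw [Finset.sum_product, Finset.sum_comm]
    apply Finset.sum_congr rfl
    intro j _
    show ∑ i, y j ^ p * w i j = y j ^ p
    rw [← Finset.mul_sum, hcol j, mul_one]
  rw [s2, s3] at key
  exact key

lemma my_psd_triangle {C A B : Matrix n n ℂ} (hC : C.PosSemidef) (hA : A.PosSemidef)
    (hB : B.PosSemidef) (hsum : C = A + B) (p : ℝ) (hp : 1 ≤ p) :
    (∑ i, hC.1.eigenvalues i ^ p) ^ (1/p)
      ≤ (∑ i, hA.1.eigenvalues i ^ p) ^ (1/p) + (∑ i, hB.1.eigenvalues i ^ p) ^ (1/p) := by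
  set γ := hC.1.eigenvalues with hγ
  set α := hA.1.eigenvalues with hα
  set β := hB.1.eigenvalues with hβ
  have hγ0 : ∀ i, 0 ≤ γ i := fun i => hC.eigenvalues_nonneg i
  have hα0 : ∀ i, 0 ≤ α i := fun i => hA.eigenvalues_nonneg i
  have hβ0 : ∀ i, 0 ≤ β i := fun i => hB.eigenvalues_nonneg i
  set W : Matrix n n ℂ := (hC.1.eigenvectorUnitary : Matrix n n ℂ) with hW
  set VA : Matrix n n ℂ := (hA.1.eigenvectorUnitary : Matrix n n ℂ) with hVA
  set VB : Matrix n n ℂ := (hB.1.eigenvectorUnitary : Matrix n n ℂ) with hVB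
  have hWu : W * star W = 1 := (Matrix.mem_unitaryGroup_iff).mp (hC.1.eigenvectorUnitary).2
  have hWu' : star W * W = 1 := (Matrix.mem_unitaryGroup_iff').mp (hC.1.eigenvectorUnitary).2
  have hVAu : VA * star VA = 1 := (Matrix.mem_unitaryGroup_iff).mp (hA.1.eigenvectorUnitary).2
  have hVAu' : star VA * VA = 1 := (Matrix.mem_unitaryGroup_iff').mp (hA.1.eigenvectorUnitary).2
  have hVBu : VB * star VB = 1 := (Matrix.mem_unitaryGroup_iff).mp (hB.1.eigenvectorUnitary).2
  have hVBu' : star VB * VB = 1 := (Matrix.mem_unitaryGroup_iff').mp (hB.1.eigenvectorUnitary).2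
  have hCdec : C = W * Matrix.diagonal (fun i => (γ i : ℂ)) * star W := hC.1.spectral_theorem
  have hAdec : A = VA * Matrix.diagonal (fun i => (α i : ℂ)) * star VA := hA.1.spectral_theorem
  have hBdec : B = VB * Matrix.diagonal (fun i => (β i : ℂ)) * star VB := hB.1.spectral_theorem
  rcases eq_or_lt_of_le hp with hp1 | hp1
  · -- p = 1
    subst hp1
    have tC : C.trace = ((∑ i, γ i : ℝ) : ℂ) := by
      rw [hCdec, Matrix.trace_mul_cycle, hWu', Matrix.one_mul,
        Matrix.trace_diagonal]
      push_cast; rfl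
    have tA : A.trace = ((∑ i, α i : ℝ) : ℂ) := by
      rw [hAdec, Matrix.trace_mul_cycle, hVAu', Matrix.one_mul,
        Matrix.trace_diagonal]
      push_cast; rfl
    have tB : B.trace = ((∑ i, β i : ℝ) : ℂ) := by
      rw [hBdec, Matrix.trace_mul_cycle, hVBu', Matrix.one_mul,
        Matrix.trace_diagonal]
      push_cast; rfl
    have hsums : ∑ i, γ i = ∑ i, α i + ∑ i, β i := by
      have h2 : C.trace = A.trace + B.trace := by rw [hsum, Matrix.trace_add]
      rw [tC, tA, tB, ← Complex.ofReal_add] at h2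
      exact_mod_cast h2
    have hone : (1:ℝ)/1 = 1 := by norm_num
    rw [hone, Real.rpow_one, Real.rpow_one, Real.rpow_one]
    calc ∑ i, γ i ^ (1:ℝ) = ∑ i, γ i := by
          apply Finset.sum_congr rfl; intro i _; exact Real.rpow_one _
      _ = ∑ i, α i + ∑ i, β i := hsums
      _ ≤ ∑ i, α i ^ (1:ℝ) + ∑ i, β i ^ (1:ℝ) := by
          apply le_of_eq
          congr 1 <;> (apply Finset.sum_congr rfl; intro i _; exact (Real.rpow_one _).symm)
  · -- 1 < p
    have hpq : p.HolderConjugate (Real.conjExponent p) := Real.HolderConjugate.conjExponent hp1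
    set q := Real.conjExponent p with hqdef
    have hp0 : (0:ℝ) < p := hpq.pos
    have hq0 : (0:ℝ) < q := hpq.symm.pos
    have hsum1 : 1/q + 1/p = 1 := by
      rw [one_div, one_div, add_comm]; exact hpq.inv_add_inv_eq_one
    set t : n → ℝ := fun i => γ i ^ (p - 1) with ht
    have ht0 : ∀ i, 0 ≤ t i := fun i => Real.rpow_nonneg (hγ0 i) _
    set TT : Matrix n n ℂ := W * Matrix.diagonal (fun i => (t i : ℂ)) * star W with hTT
    have hg : ∑ i, ∑ j, t i * γ j * Complex.normSq ((star W * W) i j) = ∑ i, γ i ^ p := by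
      rw [hWu']
      apply Finset.sum_congr rfl
      intro i _
      rw [Finset.sum_eq_single i (fun j _ hj => by
        rw [Matrix.one_apply_ne' hj]; simp) (by simp)]
      rw [Matrix.one_apply_eq]
      simp only [Complex.normSq_one, mul_one]
      by_cases h0 : γ i = 0
      · rw [h0, mul_zero, Real.zero_rpow hp0.ne']
      · show γ i ^ (p-1) * γ i = γ i ^ p
        rw [show p = (p-1)+1 by ring, Real.rpow_add_one h0]
        ring_nf
    have e1 : (TT * C).trace = ((∑ i, γ i ^ p : ℝ) : ℂ) := by
      rw [hTT, hCdec, ← hg]; exact my_trace_formula t γ W W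
    have e2 : (TT * A).trace
        = ((∑ i, ∑ j, t i * α j * Complex.normSq ((star W * VA) i j) : ℝ) : ℂ) := by
      rw [hTT, hAdec]; exact my_trace_formula t α W VA
    have e3 : (TT * B).trace
        = ((∑ i, ∑ j, t i * β j * Complex.normSq ((star W * VB) i j) : ℝ) : ℂ) := by
      rw [hTT, hBdec]; exact my_trace_formula t β W VB
    have lin : (TT * C).trace = (TT * A).trace + (TT * B).trace := by
      rw [hsum, Matrix.mul_add, Matrix.trace_add]
    have hre : (∑ i, γ i ^ p : ℝ)
        = (∑ i, ∑ j, t i * α j * Complex.normSq ((star W * VA) i j))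
          + (∑ i, ∑ j, t i * β j * Complex.normSq ((star W * VB) i j)) := by
      rw [e1, e2, e3, ← Complex.ofReal_add] at lin
      exact_mod_cast lin
    have hGA : (star W * VA) * star (star W * VA) = 1 := by
      rw [StarMul.star_mul, star_star]
      calc star W * VA * (star VA * W) = star W * (VA * star VA) * W := by
            simp only [Matrix.mul_assoc]
        _ = 1 := by rw [hVAu, Matrix.mul_one, hWu']
    have hGA' : star (star W * VA) * (star W * VA) = 1 := by
      rw [StarMul.star_mul, star_star]
      calc star VA * W * (star W * VA) = star VA * (W * star W) * VA := by
            simp only [Matrix.mul_assoc]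
        _ = 1 := by rw [hWu, Matrix.mul_one, hVAu']
    have hGB : (star W * VB) * star (star W * VB) = 1 := by
      rw [StarMul.star_mul, star_star]
      calc star W * VB * (star VB * W) = star W * (VB * star VB) * W := by
            simp only [Matrix.mul_assoc]
        _ = 1 := by rw [hVBu, Matrix.mul_one, hWu']
    have hGB' : star (star W * VB) * (star W * VB) = 1 := by
      rw [StarMul.star_mul, star_star]
      calc star VB * W * (star W * VB) = star VB * (W * star W) * VB := by
            simp only [Matrix.mul_assoc]
        _ = 1 := by rw [hWu, Matrix.mul_one, hVBu']
    have htq : ∑ i, t i ^ q = ∑ i, γ i ^ p := by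
      apply Finset.sum_congr rfl
      intro i _
      show (γ i ^ (p-1)) ^ q = γ i ^ p
      rw [← Real.rpow_mul (hγ0 i), hpq.sub_one_mul_conj]
    have hbA : ∑ i, ∑ j, t i * α j * Complex.normSq ((star W * VA) i j)
        ≤ (∑ i, γ i ^ p) ^ (1/q) * (∑ j, α j ^ p) ^ (1/p) := by
      rw [← htq]
      exact my_holder hpq (fun i j => Complex.normSq ((star W * VA) i j))
        (fun i j => Complex.normSq_nonneg _)
        (fun i => my_row_sum hGA i) (fun j => my_col_sum hGA' j) t α ht0 hα0
    have hbB : ∑ i, ∑ j, t i * β j * Complex.normSq ((star W * VB) i j)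
        ≤ (∑ i, γ i ^ p) ^ (1/q) * (∑ j, β j ^ p) ^ (1/p) := by
      rw [← htq]
      exact my_holder hpq (fun i j => Complex.normSq ((star W * VB) i j))
        (fun i j => Complex.normSq_nonneg _)
        (fun i => my_row_sum hGB i) (fun j => my_col_sum hGB' j) t β ht0 hβ0
    have hmain : (∑ i, γ i ^ p) ≤ (∑ i, γ i ^ p) ^ (1/q)
        * ((∑ i, α i ^ p) ^ (1/p) + (∑ i, β i ^ p) ^ (1/p)) := by
      conv_lhs => rw [hre]
      rw [mul_add]
      exact add_le_add hbA hbB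
    have hg0 : 0 ≤ ∑ i, γ i ^ p :=
      Finset.sum_nonneg fun i _ => Real.rpow_nonneg (hγ0 i) _
    rcases eq_or_lt_of_le hg0 with h0 | h0
    · rw [← h0, Real.zero_rpow (by positivity : (1:ℝ)/p ≠ 0)]
      have : 0 ≤ (∑ i, α i ^ p) ^ (1/p) :=
        Real.rpow_nonneg (Finset.sum_nonneg fun i _ => Real.rpow_nonneg (hα0 i) _) _
      have : 0 ≤ (∑ i, β i ^ p) ^ (1/p) :=
        Real.rpow_nonneg (Finset.sum_nonneg fun i _ => Real.rpow_nonneg (hβ0 i) _) _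
      positivity
    · refine le_of_mul_le_mul_left ?_ (Real.rpow_pos_of_pos h0 (1/q))
      calc (∑ i, γ i ^ p) ^ (1/q) * (∑ i, γ i ^ p) ^ (1/p)
          = ∑ i, γ i ^ p := by
            rw [← Real.rpow_add h0, hsum1, Real.rpow_one]
        _ ≤ (∑ i, γ i ^ p) ^ (1/q)
              * ((∑ i, α i ^ p) ^ (1/p) + (∑ i, β i ^ p) ^ (1/p)) := hmain

lemma my_sum_of_charpoly_block {S : Matrix n n ℂ} {Xm : Matrix m m ℂ}
    (hS : S.IsHermitian) (hX : Xm.IsHermitian) (k : ℕ)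
    (h : S.charpoly = Xm.charpoly * (X : ℂ[X]) ^ k) (f : ℝ → ℝ) (hf : f 0 = 0) :
    ∑ i, f (hS.eigenvalues i) = ∑ j, f (hX.eigenvalues j) := by
  have hroots : S.charpoly.roots = Xm.charpoly.roots + Multiset.replicate k 0 := by
    rw [h, Polynomial.roots_mul, Polynomial.roots_pow, Polynomial.roots_X,
      Multiset.nsmul_singleton]
    rw [← h]
    exact (Matrix.charpoly_monic S).ne_zero
  rw [my_charpoly_hermitian hS, my_roots_prod] at hroots
  rw [my_charpoly_hermitian hX, my_roots_prod] at hroots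
  have hreal : Multiset.map hS.eigenvalues Finset.univ.val
      = Multiset.map hX.eigenvalues Finset.univ.val + Multiset.replicate k (0:ℝ) := by
    apply Multiset.map_injective Complex.ofReal_injective
    rw [Multiset.map_map, Multiset.map_add, Multiset.map_map, Multiset.map_replicate]
    simpa using hroots
  have hS' : ∑ i, f (hS.eigenvalues i)
      = (Multiset.map f (Multiset.map hS.eigenvalues Finset.univ.val)).sum := by
    rw [Multiset.map_map, Finset.sum_eq_multiset_sum]; rfl
  have hX' : ∑ j, f (hX.eigenvalues j)
      = (Multiset.map f (Multiset.map hX.eigenvalues Finset.univ.val)).sum := by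
    rw [Multiset.map_map, Finset.sum_eq_multiset_sum]; rfl
  rw [hS', hX', hreal, Multiset.map_add, Multiset.sum_add, Multiset.map_replicate, hf,
    Multiset.sum_replicate, smul_zero, add_zero]

lemma my_charpoly_zero : (0 : Matrix n n ℂ).charpoly = (X : ℂ[X]) ^ (Fintype.card n) := by
  rw [← Matrix.diagonal_zero, my_charpoly_diagonal]
  simp [Finset.prod_const, Finset.card_univ]


end MyAuxSchatten

/-- For a positive semidefinite block matrix `M = [[X, Y], [Yᴴ, Z]]` and any
`p ≥ 1`, `‖M‖_p ≤ ‖X‖_p + ‖Z‖_p`. -/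
theorem schattenNorm_fromBlocks_le {K : Type*} [Fintype K] [DecidableEq K]
    (X Y Z : Matrix K K ℂ) (hM : (Matrix.fromBlocks X Y Yᴴ Z).PosSemidef)
    (p : ℝ) (hp : 1 ≤ p) :
    schattenNorm p (Matrix.fromBlocks X Y Yᴴ Z) ≤ schattenNorm p X + schattenNorm p Z := by
  have hp0 : (0:ℝ) < p := lt_of_lt_of_le zero_lt_one hp
  set M : Matrix (K ⊕ K) (K ⊕ K) ℂ := Matrix.fromBlocks X Y Yᴴ Z with hMdef
  -- X and Z are PSD
  have hXpsd : X.PosSemidef := by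
    have h := hM.submatrix (Sum.inl : K → K ⊕ K)
    have e : M.submatrix Sum.inl Sum.inl = X := by ext a b; rfl
    rwa [e] at h
  have hZpsd : Z.PosSemidef := by
    have h := hM.submatrix (Sum.inr : K → K ⊕ K)
    have e : M.submatrix Sum.inr Sum.inr = Z := by ext a b; rfl
    rwa [e] at h
  -- square root and projections
  open scoped MatrixOrder in set R : Matrix (K ⊕ K) (K ⊕ K) ℂ := CFC.sqrt M with hRdef
  have hRpsd : R.PosSemidef := by open scoped MatrixOrder in exact (CFC.sqrt_nonneg M).posSemidef
  have hRH : Rᴴ = R := hRpsd.1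
  have hRR : R * R = M := by open scoped MatrixOrder in exact CFC.sqrt_mul_sqrt_self M hM.nonneg
  set P1 : Matrix (K ⊕ K) (K ⊕ K) ℂ := Matrix.fromBlocks 1 0 0 0 with hP1def
  set P2 : Matrix (K ⊕ K) (K ⊕ K) ℂ := Matrix.fromBlocks 0 0 0 1 with hP2def
  have hP1H : P1ᴴ = P1 := by
    rw [hP1def, Matrix.fromBlocks_conjTranspose]; simp
  have hP2H : P2ᴴ = P2 := by
    rw [hP2def, Matrix.fromBlocks_conjTranspose]; simp
  have hP1sq : P1 * P1 = P1 := by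
    rw [hP1def, Matrix.fromBlocks_multiply]; simp
  have hP2sq : P2 * P2 = P2 := by
    rw [hP2def, Matrix.fromBlocks_multiply]; simp
  -- S and T
  have hSpsd : (R * P1 * R).PosSemidef := by
    have h := Matrix.posSemidef_conjTranspose_mul_self (P1 * R)
    have e : (P1 * R)ᴴ * (P1 * R) = R * P1 * R := by
      rw [Matrix.conjTranspose_mul, hRH, hP1H]
      calc R * P1 * (P1 * R) = R * (P1 * P1) * R := by simp only [Matrix.mul_assoc]
        _ = R * P1 * R := by rw [hP1sq]
    rwa [e] at h
  have hTpsd : (R * P2 * R).PosSemidef := by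
    have h := Matrix.posSemidef_conjTranspose_mul_self (P2 * R)
    have e : (P2 * R)ᴴ * (P2 * R) = R * P2 * R := by
      rw [Matrix.conjTranspose_mul, hRH, hP2H]
      calc R * P2 * (P2 * R) = R * (P2 * P2) * R := by simp only [Matrix.mul_assoc]
        _ = R * P2 * R := by rw [hP2sq]
    rwa [e] at h
  have hsplit : M = R * P1 * R + R * P2 * R := by
    have hone : P1 + P2 = 1 := by
      rw [hP1def, hP2def, Matrix.fromBlocks_add]
      simp only [add_zero, zero_add]
      exact Matrix.fromBlocks_one
    calc M = R * R := hRR.symm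
      _ = R * (1 : Matrix (K⊕K) (K⊕K) ℂ) * R := by rw [Matrix.mul_one]
      _ = R * (P1 + P2) * R := by rw [hone]
      _ = R * P1 * R + R * P2 * R := by rw [Matrix.mul_add, Matrix.add_mul]
  -- charpoly identities
  have hcharS : (R * P1 * R).charpoly = X.charpoly * (Polynomial.X : Polynomial ℂ) ^ (Fintype.card K) := by
    have h1 : (R * P1 * R).charpoly = (M * P1).charpoly := by
      rw [my_charpoly_mul_comm (R * P1) R, ← Matrix.mul_assoc, hRR]
    have h2 : M * P1 = Matrix.fromBlocks X 0 Yᴴ 0 := by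
      rw [hMdef, hP1def, Matrix.fromBlocks_multiply]; simp
    rw [h1, h2, Matrix.charpoly_fromBlocks_zero₁₂, my_charpoly_zero]
  have hcharT : (R * P2 * R).charpoly = Z.charpoly * (Polynomial.X : Polynomial ℂ) ^ (Fintype.card K) := by
    have h1 : (R * P2 * R).charpoly = (M * P2).charpoly := by
      rw [my_charpoly_mul_comm (R * P2) R, ← Matrix.mul_assoc, hRR]
    have h2 : M * P2 = Matrix.fromBlocks 0 Y 0 Z := by
      rw [hMdef, hP2def, Matrix.fromBlocks_multiply]; simp
    rw [h1, h2, Matrix.charpoly_fromBlocks_zero₂₁, my_charpoly_zero, mul_comm]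
  -- reduce Schatten norms to eigenvalue sums
  have hf0 : (fun x : ℝ => x ^ p) 0 = 0 := Real.zero_rpow hp0.ne'
  have hsX : ∑ i, hSpsd.1.eigenvalues i ^ p = ∑ j, hXpsd.1.eigenvalues j ^ p :=
    my_sum_of_charpoly_block (f := fun x => x ^ p) hSpsd.1 hXpsd.1 (Fintype.card K) hcharS hf0
  have hsZ : ∑ i, hTpsd.1.eigenvalues i ^ p = ∑ j, hZpsd.1.eigenvalues j ^ p :=
    my_sum_of_charpoly_block (f := fun x => x ^ p) hTpsd.1 hZpsd.1 (Fintype.card K) hcharT hf0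
  have tri := my_psd_triangle hM hSpsd hTpsd hsplit p hp
  rw [hsX, hsZ] at tri
  rw [schattenNorm, schattenNorm, schattenNorm, my_traceAbsPow_psd p hp0 hM,
    my_traceAbsPow_psd p hp0 hXpsd, my_traceAbsPow_psd p hp0 hZpsd]
  exact tri
end

section
/- Let M be a positive semidefinite 2K×2K matrix written in K×K blocks as M = [[X, Y],[Y*, Z]]. Then for every p ≥ 1, ||Y||_p ≤ (||X||_p · ||Z||_p)^{1/2}; in particular the 2×2 real matrix [[||X||_p, ||Y||_p],[||Y||_p, ||Z||_p]] is positive semidefinite. -/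
open scoped Kronecker ComplexOrder
open Matrix

set_option linter.unusedSectionVars false
set_option maxHeartbeats 1000000

section AuxLemmas
variable {K : Type*} [Fintype K] [DecidableEq K]

lemma aux_col (A W : Matrix K K ℂ) (i j : K) :
    star (fun k => W k i) ⬝ᵥ (A *ᵥ fun k => W k j) = (Wᴴ * A * W) i j := by
  simp only [dotProduct, mulVec, mul_apply, conjTranspose_apply, Pi.star_apply, RCLike.star_def]
  simp_rw [Finset.mul_sum, Finset.sum_mul]
  rw [Finset.sum_comm]
  exact Finset.sum_congr rfl fun x _ => Finset.sum_congr rfl fun y _ => by ring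

lemma aux_conj_dot (Y : Matrix K K ℂ) (u v : K → ℂ) :
    star v ⬝ᵥ (Yᴴ *ᵥ u) = (starRingEnd ℂ) (star u ⬝ᵥ (Y *ᵥ v)) := by
  rw [mulVec_conjTranspose, star_dotProduct_star, ← dotProduct_mulVec]
  rfl

lemma aux_blockCS {X Y Z : Matrix K K ℂ} (hM : (fromBlocks X Y Yᴴ Z).PosSemidef)
    (u v : K → ℂ) :
    ‖star u ⬝ᵥ (Y *ᵥ v)‖ ^ 2 ≤
      (star u ⬝ᵥ (X *ᵥ u)).re * (star v ⬝ᵥ (Z *ᵥ v)).re := by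
  set y : ℂ := star u ⬝ᵥ (Y *ᵥ v) with hy
  set A : ℝ := (star u ⬝ᵥ (X *ᵥ u)).re with hA
  set C : ℝ := (star v ⬝ᵥ (Z *ᵥ v)).re with hC
  have key : ∀ r : ℝ, 0 ≤ (A * ‖y‖ ^ 2) * (r * r) +
      (-(2 * ‖y‖ ^ 2)) * r + C := by
    intro r
    have h0 := hM.dotProduct_mulVec_nonneg (Sum.elim ((-(r:ℂ) * y) • u) v)
    rw [Complex.nonneg_iff] at h0
    have hstar : star (Sum.elim ((-(r:ℂ) * y) • u) v) =
        Sum.elim (star ((-(r:ℂ) * y) • u)) (star v) := by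
      funext x; cases x <;> rfl
    rw [hstar, fromBlocks_mulVec, sumElim_dotProduct_sumElim] at h0
    have h1 := h0.1
    simp only [Sum.elim_comp_inl, Sum.elim_comp_inr, mulVec_smul, star_smul, dotProduct_add,
      dotProduct_smul, smul_dotProduct, smul_eq_mul, aux_conj_dot, RCLike.star_def] at h1
    simp only [Complex.add_re, Complex.mul_re, Complex.mul_im, Complex.conj_re, Complex.conj_im,
      Complex.neg_re, Complex.neg_im, Complex.ofReal_re, Complex.ofReal_im] at h1
    rw [← hA, ← hC] at h1
    rw [Complex.sq_norm, Complex.normSq_apply]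
    ring_nf at h1 ⊢
    linarith [h1]
  have hd := discrim_le_zero key
  have hC0 : 0 ≤ C := by simpa using key 0
  have hXps : X.PosSemidef := by
    have := hM.submatrix (Sum.inl : K → K ⊕ K)
    have hXeq : (fromBlocks X Y Yᴴ Z).submatrix (Sum.inl : K → K ⊕ K) Sum.inl = X := by
      ext i j; simp [fromBlocks]
    rwa [hXeq] at this
  have hA0 : 0 ≤ A := by
    have := hXps.dotProduct_mulVec_nonneg u
    rw [Complex.nonneg_iff] at this
    exact this.1
  rw [discrim] at hd
  rcases eq_or_lt_of_le (norm_nonneg y) with h | h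
  · rw [← h]; simpa using mul_nonneg hA0 hC0
  · have h2 : 0 < ‖y‖ ^ 2 := by positivity
    apply le_of_mul_le_mul_right _ h2
    nlinarith [hd]

lemma aux_dot_self_re_nonneg (x : K → ℂ) : 0 ≤ (star x ⬝ᵥ x).re := by
  have : star x ⬝ᵥ x = ((∑ k, Complex.normSq (x k) : ℝ) : ℂ) := by
    push_cast
    simp only [dotProduct, Pi.star_apply, RCLike.star_def]
    exact Finset.sum_congr rfl fun k _ => by rw [mul_comm, Complex.mul_conj]
  rw [this, Complex.ofReal_re]
  exact Finset.sum_nonneg fun k _ => Complex.normSq_nonneg _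

lemma aux_bessel (S : Finset K) (f : K → K → ℂ)
    (horth : ∀ i ∈ S, ∀ j ∈ S, star (f i) ⬝ᵥ f j = if i = j then 1 else 0) (j : K) :
    ∑ i ∈ S, Complex.normSq (f i j) ≤ 1 := by
  classical
  set g : K → ℂ := fun k => ∑ i ∈ S, (starRingEnd ℂ) (f i j) * f i k with hg
  set B : ℝ := ∑ i ∈ S, Complex.normSq (f i j) with hB
  have hBc : (B : ℂ) = ∑ i ∈ S, (starRingEnd ℂ) (f i j) * f i j := by
    rw [hB]
    push_cast
    exact Finset.sum_congr rfl fun i _ => by rw [mul_comm, Complex.mul_conj]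
  have key2 : ∀ w : K → ℂ, star w ⬝ᵥ g =
      ∑ i ∈ S, (starRingEnd ℂ) (f i j) * (star w ⬝ᵥ f i) := by
    intro w
    simp only [dotProduct, hg, Finset.mul_sum, Pi.star_apply, RCLike.star_def]
    rw [Finset.sum_comm]
    exact Finset.sum_congr rfl fun i _ => Finset.sum_congr rfl fun k _ => by ring
  have hgfi : ∀ i ∈ S, star g ⬝ᵥ f i = f i j := by
    intro i hi
    rw [star_dotProduct, key2 (f i)]
    rw [Finset.sum_congr rfl fun k hk => by rw [horth i hi k hk]]
    simp [Finset.sum_ite_eq, hi]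
  have hgg : star g ⬝ᵥ g = (B : ℂ) := by
    rw [key2 g, hBc]
    exact Finset.sum_congr rfl fun i hi => by rw [hgfi i hi]
  set e : K → ℂ := Pi.single j (1:ℂ) with he
  have hge : star g ⬝ᵥ e = (B : ℂ) := by
    rw [he, dotProduct_single, mul_one, hBc]
    have h1 : star g j = (starRingEnd ℂ) (g j) := rfl
    rw [h1, hg]
    simp only [map_sum]
    exact Finset.sum_congr rfl fun i _ => by
      rw [mul_comm, Complex.mul_conj, Complex.conj_ofReal]
  have hs : star e = e := by
    funext k
    rcases eq_or_ne k j with rfl | hk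
    · simp [he]
    · simp [he, Pi.single_eq_of_ne hk]
  have heg : star e ⬝ᵥ g = (B : ℂ) := by
    rw [hs, he, single_dotProduct, one_mul, hBc]
  have hee : star e ⬝ᵥ e = 1 := by
    rw [hs, he, dotProduct_single, mul_one]
    simp
  have hfin := aux_dot_self_re_nonneg (e - g)
  rw [show star (e - g) = star e - star g from star_sub _ _,
    sub_dotProduct, dotProduct_sub, dotProduct_sub, hee, heg, hge, hgg] at hfin
  have : (1 - (B:ℂ) - ((B:ℂ) - (B:ℂ))).re = 1 - B := by
    simp
  rw [this] at hfin
  linarith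

lemma aux_pinch {p : ℝ} (hp : 1 ≤ p) (W : Matrix K K ℂ) (hW : W ∈ Matrix.unitaryGroup K ℂ)
    (μ : K → ℝ) (hμ : ∀ j, 0 ≤ μ j) (S : Finset K) (e : K → K → ℂ)
    (he : ∀ i ∈ S, ∀ j ∈ S, star (e i) ⬝ᵥ e j = if i = j then 1 else 0) :
    ∑ i ∈ S, ((star (e i) ⬝ᵥ ((W * diagonal (Complex.ofReal ∘ μ) * Wᴴ) *ᵥ e i)).re) ^ p
      ≤ ∑ j, μ j ^ p := by
  classical
  set f : K → K → ℂ := fun i => Wᴴ *ᵥ e i with hf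
  have hWW : W * Wᴴ = 1 := by
    have := (Matrix.mem_unitaryGroup_iff).mp hW
    rwa [star_eq_conjTranspose] at this
  have hstarf : ∀ i, star (f i) = star (e i) ᵥ* W := by
    intro i
    rw [hf]
    rw [star_mulVec, conjTranspose_conjTranspose]
  have hforth : ∀ i ∈ S, ∀ j ∈ S, star (f i) ⬝ᵥ f j = if i = j then 1 else 0 := by
    intro i hi j hj
    rw [hstarf, hf, ← dotProduct_mulVec, mulVec_mulVec, hWW, one_mulVec]
    exact he i hi j hj
  have hval : ∀ i, (star (e i) ⬝ᵥ ((W * diagonal (Complex.ofReal ∘ μ) * Wᴴ) *ᵥ e i)).re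
      = ∑ j, μ j * Complex.normSq (f i j) := by
    intro i
    rw [← mulVec_mulVec, ← mulVec_mulVec, dotProduct_mulVec, ← hstarf]
    have : star (f i) ⬝ᵥ (diagonal (Complex.ofReal ∘ μ) *ᵥ f i)
        = ((∑ j, μ j * Complex.normSq (f i j) : ℝ) : ℂ) := by
      push_cast
      simp only [dotProduct, mulVec_diagonal, Function.comp_apply, Pi.star_apply,
        RCLike.star_def]
      refine Finset.sum_congr rfl fun j _ => ?_
      rw [mul_left_comm, mul_comm ((starRingEnd ℂ) (f i j)) (f i j), Complex.mul_conj]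
    rw [this, Complex.ofReal_re]
  have hrow : ∀ i ∈ S, ∑ j, Complex.normSq (f i j) = 1 := by
    intro i hi
    have h1 := hforth i hi i hi
    rw [if_pos rfl] at h1
    have : star (f i) ⬝ᵥ f i = ((∑ j, Complex.normSq (f i j) : ℝ) : ℂ) := by
      push_cast
      simp only [dotProduct, Pi.star_apply, RCLike.star_def]
      exact Finset.sum_congr rfl fun j _ => by rw [mul_comm, Complex.mul_conj]
    rw [this] at h1
    exact_mod_cast h1
  calc ∑ i ∈ S, ((star (e i) ⬝ᵥ ((W * diagonal (Complex.ofReal ∘ μ) * Wᴴ) *ᵥ e i)).re) ^ p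
      ≤ ∑ i ∈ S, ∑ j, Complex.normSq (f i j) * μ j ^ p := by
        refine Finset.sum_le_sum fun i hi => ?_
        rw [hval i]
        have := Real.rpow_arith_mean_le_arith_mean_rpow Finset.univ
          (fun j => Complex.normSq (f i j)) μ
          (fun j _ => Complex.normSq_nonneg _) (hrow i hi) (fun j _ => hμ j) hp
        calc ((∑ j, μ j * Complex.normSq (f i j)) : ℝ) ^ p
            = (∑ j, Complex.normSq (f i j) * μ j) ^ p := by
              congr 1; exact Finset.sum_congr rfl fun j _ => mul_comm _ _
          _ ≤ ∑ j, Complex.normSq (f i j) * μ j ^ p := this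
    _ = ∑ j, (∑ i ∈ S, Complex.normSq (f i j)) * μ j ^ p := by
        rw [Finset.sum_comm]
        exact Finset.sum_congr rfl fun j _ => by rw [Finset.sum_mul]
    _ ≤ ∑ j, μ j ^ p := by
        refine Finset.sum_le_sum fun j _ => ?_
        have hb := aux_bessel S f hforth j
        have hμp : 0 ≤ μ j ^ p := Real.rpow_nonneg (hμ j) p
        nlinarith [hb, hμp]

lemma aux_holder {ι : Type*} {p : ℝ} (hp : 1 ≤ p) (S : Finset ι) (f g : ι → ℝ)
    (hf : ∀ i ∈ S, 0 ≤ f i) (hg : ∀ i ∈ S, 0 ≤ g i) :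
    ∑ i ∈ S, f i ^ (p-1) * g i ≤
      (∑ i ∈ S, f i ^ p) ^ ((p-1)/p) * (∑ i ∈ S, g i ^ p) ^ (1/p) := by
  rcases eq_or_lt_of_le hp with rfl | hp1
  · simp only [sub_self, Real.rpow_zero, one_mul, zero_div, Real.rpow_one, div_self,
      ne_eq, one_ne_zero, not_false_eq_true]
    norm_num
  · have hq : (p/(p-1)).HolderConjugate p := by
      have := (Real.HolderConjugate.conjExponent hp1).symm
      rwa [Real.conjExponent] at this
    have h := Real.inner_le_Lp_mul_Lq S (fun i => f i ^ (p-1)) g hq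
    have hL : ∑ i ∈ S, |f i ^ (p-1)| ^ (p/(p-1)) = ∑ i ∈ S, f i ^ p := by
      refine Finset.sum_congr rfl fun i hi => ?_
      rw [abs_of_nonneg (Real.rpow_nonneg (hf i hi) _), ← Real.rpow_mul (hf i hi)]
      have hne : p - 1 ≠ 0 := by linarith
      congr 1
      field_simp
    beta_reduce at h
    have hR : ∑ i ∈ S, |g i| ^ p = ∑ i ∈ S, g i ^ p :=
      Finset.sum_congr rfl fun i hi => by rw [abs_of_nonneg (hg i hi)]
    rw [hL, hR] at h
    have h1q : 1/(p/(p-1)) = (p-1)/p := by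
      rw [one_div_div]
    rwa [h1q] at h

lemma aux_decomp {X : Matrix K K ℂ} (hX : X.PosSemidef) {p : ℝ} :
    ∃ (W : Matrix K K ℂ) (μ : K → ℝ), W ∈ Matrix.unitaryGroup K ℂ ∧ (∀ j, 0 ≤ μ j) ∧
      X = W * diagonal (Complex.ofReal ∘ μ) * Wᴴ ∧ ∑ j, μ j ^ p = traceAbsPow p X := by
  classical
  have hQ : (Xᴴ * X).PosSemidef := Matrix.posSemidef_conjTranspose_mul_self X
  set h : (Xᴴ * X).IsHermitian := hQ.1 with hh
  set ν : K → ℝ := h.eigenvalues with hν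
  have hν0 : ∀ j, 0 ≤ ν j := fun j => hQ.eigenvalues_nonneg j
  set W : Matrix K K ℂ := (h.eigenvectorUnitary : Matrix K K ℂ) with hW
  have hWmem : W ∈ Matrix.unitaryGroup K ℂ := h.eigenvectorUnitary.2
  set μ : K → ℝ := fun j => Real.sqrt (ν j) with hμ
  refine ⟨W, μ, hWmem, fun j => Real.sqrt_nonneg _, ?_, ?_⟩
  · -- X = W diag μ Wᴴ
    set R : Matrix K K ℂ := W * diagonal (Complex.ofReal ∘ μ) * Wᴴ with hR
    have hRps : R.PosSemidef := by
      refine Matrix.PosSemidef.mul_mul_conjTranspose_same ?_ W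
      refine Matrix.PosSemidef.diagonal ?_
      intro j
      simp only [Pi.zero_apply, Function.comp_apply]
      rw [Complex.zero_le_real]
      exact Real.sqrt_nonneg _
    have hWuW : Wᴴ * W = 1 := by
      have := (Matrix.mem_unitaryGroup_iff').mp hWmem
      rwa [star_eq_conjTranspose] at this
    have hR2 : R ^ 2 = X ^ 2 := by
      have hdd : diagonal (Complex.ofReal ∘ μ) * diagonal (Complex.ofReal ∘ μ)
          = diagonal (Complex.ofReal ∘ ν) := by
        rw [diagonal_mul_diagonal]
        refine congrArg diagonal (funext fun j => ?_)
        simp only [Pi.mul_apply, Function.comp_apply, ← Complex.ofReal_mul, hμ]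
        exact congrArg Complex.ofReal (Real.mul_self_sqrt (hν0 j))
      calc R ^ 2 = W * diagonal (Complex.ofReal ∘ μ) * (Wᴴ * W) * diagonal (Complex.ofReal ∘ μ) * Wᴴ := by
            rw [pow_two, hR]; noncomm_ring
        _ = W * diagonal (Complex.ofReal ∘ ν) * Wᴴ := by
            rw [hWuW, mul_one, mul_assoc (W * diagonal (Complex.ofReal ∘ μ)), ← hdd]; noncomm_ring
        _ = Xᴴ * X := by
            have := h.spectral_theorem
            simp only [Unitary.conjStarAlgAut_apply, Unitary.coe_star, star_eq_conjTranspose] at this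
            exact this.symm
        _ = X ^ 2 := by rw [hX.1, pow_two]
    open scoped MatrixOrder in exact ((CFC.sq_eq_sq_iff R X hRps.nonneg hX.nonneg).mp hR2).symm
  · -- sum equality
    rw [traceAbsPow]
    refine Finset.sum_congr rfl fun j _ => ?_
    simp only [hμ]
    rw [Real.sqrt_eq_rpow, ← Real.rpow_mul (hν0 j)]
    congr 1
    ring

end AuxLemmas

/-- For a positive semidefinite block matrix `M = [[X, Y], [Yᴴ, Z]]` and any
`p ≥ 1`, `‖Y‖_p ≤ (‖X‖_p ‖Z‖_p)^{1/2}`; in particular the real `2 × 2` matrix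
`[[‖X‖_p, ‖Y‖_p], [‖Y‖_p, ‖Z‖_p]]` is positive semidefinite. -/
theorem schattenNorm_offDiag_le {K : Type*} [Fintype K] [DecidableEq K]
    (X Y Z : Matrix K K ℂ) (hM : (Matrix.fromBlocks X Y Yᴴ Z).PosSemidef)
    (p : ℝ) (hp : 1 ≤ p) :
    schattenNorm p Y ≤ Real.sqrt (schattenNorm p X * schattenNorm p Z) ∧
      (!![schattenNorm p X, schattenNorm p Y;
          schattenNorm p Y, schattenNorm p Z] : Matrix (Fin 2) (Fin 2) ℝ).PosSemidef := by
  classical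
  have hp0 : 0 < p := lt_of_lt_of_le one_pos hp
  -- Positive semidefiniteness of the diagonal blocks
  have hXps : X.PosSemidef := by
    have h := hM.submatrix (Sum.inl : K → K ⊕ K)
    have : (fromBlocks X Y Yᴴ Z).submatrix (Sum.inl : K → K ⊕ K) Sum.inl = X := by
      ext i j; simp [fromBlocks]
    rwa [this] at h
  have hZps : Z.PosSemidef := by
    have h := hM.submatrix (Sum.inr : K → K ⊕ K)
    have : (fromBlocks X Y Yᴴ Z).submatrix (Sum.inr : K → K ⊕ K) Sum.inr = Z := by
      ext i j; simp [fromBlocks]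
    rwa [this] at h
  have htap_nonneg : ∀ (B : Matrix K K ℂ), 0 ≤ traceAbsPow p B := fun B =>
    Finset.sum_nonneg fun i _ => Real.rpow_nonneg
      ((Matrix.posSemidef_conjTranspose_mul_self B).eigenvalues_nonneg i) _
  -- spectral data of YᴴY
  set hQ : (Yᴴ * Y).PosSemidef := Matrix.posSemidef_conjTranspose_mul_self Y with hhQ
  set lam : K → ℝ := hQ.1.eigenvalues with hlam
  have hlam0 : ∀ i, 0 ≤ lam i := fun i => hQ.eigenvalues_nonneg i
  set V : Matrix K K ℂ := (hQ.1.eigenvectorUnitary : Matrix K K ℂ) with hV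
  have hVV : Vᴴ * V = 1 := by
    have := (Matrix.mem_unitaryGroup_iff').mp hQ.1.eigenvectorUnitary.2
    rwa [star_eq_conjTranspose] at this
  set v : K → K → ℂ := fun i => (fun k => V k i) with hv
  have hvorth : ∀ i ∈ (Finset.univ : Finset K), ∀ j ∈ (Finset.univ : Finset K),
      star (v i) ⬝ᵥ v j = if i = j then 1 else 0 := by
    intro i _ j _
    have : star (v i) ⬝ᵥ v j = (Vᴴ * V) i j := by
      simp only [hv, dotProduct, mul_apply, conjTranspose_apply, Pi.star_apply, RCLike.star_def]
    rw [this, hVV, one_apply]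
  have hdiagY : ∀ i j, star (Y *ᵥ v i) ⬝ᵥ (Y *ᵥ v j)
      = if i = j then ((lam i : ℝ) : ℂ) else 0 := by
    intro i j
    have h1 : star (Y *ᵥ v i) ⬝ᵥ (Y *ᵥ v j) = star (v i) ⬝ᵥ ((Yᴴ * Y) *ᵥ v j) := by
      rw [star_mulVec, ← dotProduct_mulVec, mulVec_mulVec]
    rw [h1, hv]
    have h2 := aux_col (Yᴴ * Y) V i j
    rw [h2]
    have h3 := hQ.1.conjStarAlgAut_star_eigenvectorUnitary
    simp only [Unitary.conjStarAlgAut_star_apply, Unitary.coe_star, star_eq_conjTranspose] at h3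
    rw [h3, diagonal_apply]
    simp [hlam]
  -- the singular values
  set s : K → ℝ := fun i => Real.sqrt (lam i) with hs
  have hs0 : ∀ i, 0 ≤ s i := fun i => Real.sqrt_nonneg _
  have hss : ∀ i, s i * s i = lam i := fun i => Real.mul_self_sqrt (hlam0 i)
  set S : Finset K := Finset.univ.filter (fun i => lam i ≠ 0) with hS
  have hspos : ∀ i ∈ S, 0 < s i := by
    intro i hi
    rw [hS, Finset.mem_filter] at hi
    exact Real.sqrt_pos.2 (lt_of_le_of_ne (hlam0 i) (Ne.symm hi.2))
  set u : K → K → ℂ := fun i => (((s i)⁻¹ : ℝ) : ℂ) • (Y *ᵥ v i) with hu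
  have huorth : ∀ i ∈ S, ∀ j ∈ S, star (u i) ⬝ᵥ u j = if i = j then 1 else 0 := by
    intro i hi j hj
    rw [hu]
    simp only [star_smul, smul_dotProduct, dotProduct_smul, smul_eq_mul, RCLike.star_def,
      Complex.conj_ofReal]
    rw [hdiagY i j]
    rcases eq_or_ne i j with rfl | hij
    · rw [if_pos rfl, if_pos rfl]
      have hne : (s i : ℝ) ≠ 0 := ne_of_gt (hspos i hi)
      rw [← hss i]
      push_cast
      field_simp
    · rw [if_neg hij, if_neg hij, mul_zero, mul_zero]
  have hsval : ∀ i ∈ S, (star (u i) ⬝ᵥ (Y *ᵥ v i)).re = s i := by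
    intro i hi
    have hne : (s i : ℝ) ≠ 0 := ne_of_gt (hspos i hi)
    rw [hu]
    simp only [star_smul, smul_dotProduct, smul_eq_mul, RCLike.star_def, Complex.conj_ofReal]
    rw [hdiagY i i, if_pos rfl, ← hss i]
    push_cast
    rw [show ((s i : ℂ))⁻¹ * ((s i : ℂ) * (s i : ℂ)) = (s i : ℂ) by field_simp]
    exact Complex.ofReal_re _
  -- the numbers a i, c i
  set a : K → ℝ := fun i => (star (u i) ⬝ᵥ (X *ᵥ u i)).re with ha
  set c : K → ℝ := fun i => (star (v i) ⬝ᵥ (Z *ᵥ v i)).re with hc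
  have ha0 : ∀ i, 0 ≤ a i := fun i => ((Complex.nonneg_iff).mp (hXps.dotProduct_mulVec_nonneg (u i))).1
  have hc0 : ∀ i, 0 ≤ c i := fun i => ((Complex.nonneg_iff).mp (hZps.dotProduct_mulVec_nonneg (v i))).1
  have hsac : ∀ i ∈ S, s i ≤ Real.sqrt (a i * c i) := by
    intro i hi
    have h1 : s i ≤ ‖star (u i) ⬝ᵥ (Y *ᵥ v i)‖ := by
      rw [← hsval i hi]
      exact Complex.re_le_norm _
    refine h1.trans ?_
    have h2 := aux_blockCS hM (u i) (v i)
    calc ‖star (u i) ⬝ᵥ (Y *ᵥ v i)‖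
        = Real.sqrt (‖star (u i) ⬝ᵥ (Y *ᵥ v i)‖ ^ 2) := by
          rw [Real.sqrt_sq (norm_nonneg _)]
      _ ≤ Real.sqrt (a i * c i) := Real.sqrt_le_sqrt h2
  -- pinching bounds
  obtain ⟨WX, μX, hWXmem, hμX0, hXeq, hXsum⟩ := aux_decomp hXps (p := p)
  obtain ⟨WZ, μZ, hWZmem, hμZ0, hZeq, hZsum⟩ := aux_decomp hZps (p := p)
  have hApinch : ∑ i ∈ S, (a i) ^ p ≤ traceAbsPow p X := by
    rw [← hXsum]
    have h := aux_pinch hp WX hWXmem μX hμX0 S u huorth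
    rw [← hXeq] at h
    exact h
  have hCpinch : ∑ i ∈ S, (c i) ^ p ≤ traceAbsPow p Z := by
    rw [← hZsum]
    have h := aux_pinch hp WZ hWZmem μZ hμZ0 S v
      (fun i _ j _ => hvorth i (Finset.mem_univ i) j (Finset.mem_univ j))
    rw [← hZeq] at h
    exact h
  -- T' and its identification with traceAbsPow p Y
  set T : ℝ := ∑ i ∈ S, s i ^ p with hT
  have hT0 : 0 ≤ T := Finset.sum_nonneg fun i _ => Real.rpow_nonneg (hs0 i) p
  have htapY : traceAbsPow p Y = T := by
    rw [traceAbsPow, hT]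
    have h1 : ∀ i : K, lam i ^ (p/2) = s i ^ p := by
      intro i
      rw [hs]
      simp only
      rw [Real.sqrt_eq_rpow, ← Real.rpow_mul (hlam0 i)]
      congr 1
      ring
    calc (∑ i, (Matrix.posSemidef_conjTranspose_mul_self Y).1.eigenvalues i ^ (p/2))
        = ∑ i, s i ^ p := Finset.sum_congr rfl fun i _ => h1 i
      _ = ∑ i ∈ S, s i ^ p := by
          rw [hS]
          rw [Finset.sum_filter_of_ne]
          intro x _ hx
          intro hlx
          apply hx
          have : s x = 0 := by rw [hs]; simp [hlx]
          rw [this, Real.zero_rpow (ne_of_gt hp0)]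
  -- main chain
  have step1 : T ≤ ∑ i ∈ S, s i ^ (p-1) * Real.sqrt (a i * c i) := by
    rw [hT]
    refine Finset.sum_le_sum fun i hi => ?_
    have hne : s i ≠ 0 := ne_of_gt (hspos i hi)
    calc s i ^ p = s i ^ (p-1) * s i := by
          rw [← Real.rpow_add_one hne (p-1)]
          norm_num
      _ ≤ s i ^ (p-1) * Real.sqrt (a i * c i) :=
          mul_le_mul_of_nonneg_left (hsac i hi) (Real.rpow_nonneg (hs0 i) _)
  have step2 : (∑ i ∈ S, s i ^ (p-1) * Real.sqrt (a i * c i)) ^ 2 ≤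
      (∑ i ∈ S, s i ^ (p-1) * a i) * (∑ i ∈ S, s i ^ (p-1) * c i) := by
    refine Finset.sum_sq_le_sum_mul_sum_of_sq_eq_mul S ?_ ?_ ?_
    · exact fun i _ => mul_nonneg (Real.rpow_nonneg (hs0 i) _) (ha0 i)
    · exact fun i _ => mul_nonneg (Real.rpow_nonneg (hs0 i) _) (hc0 i)
    · intro i _
      rw [mul_pow, Real.sq_sqrt (mul_nonneg (ha0 i) (hc0 i))]
      ring
  have step3 : ∑ i ∈ S, s i ^ (p-1) * a i ≤ T ^ ((p-1)/p) * (traceAbsPow p X) ^ (1/p) := by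
    refine (aux_holder hp S s a (fun i hi => hs0 i) (fun i _ => ha0 i)).trans ?_
    rw [← hT]
    exact mul_le_mul_of_nonneg_left
      (Real.rpow_le_rpow (Finset.sum_nonneg fun i _ => Real.rpow_nonneg (ha0 i) p) hApinch
        (div_nonneg zero_le_one hp0.le)) (Real.rpow_nonneg hT0 _)
  have step4 : ∑ i ∈ S, s i ^ (p-1) * c i ≤ T ^ ((p-1)/p) * (traceAbsPow p Z) ^ (1/p) := by
    refine (aux_holder hp S s c (fun i hi => hs0 i) (fun i _ => hc0 i)).trans ?_
    rw [← hT]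
    exact mul_le_mul_of_nonneg_left
      (Real.rpow_le_rpow (Finset.sum_nonneg fun i _ => Real.rpow_nonneg (hc0 i) p) hCpinch
        (div_nonneg zero_le_one hp0.le)) (Real.rpow_nonneg hT0 _)
  -- conclude part 1
  have part1 : schattenNorm p Y ≤ Real.sqrt (schattenNorm p X * schattenNorm p Z) := by
    rw [schattenNorm, schattenNorm, schattenNorm, htapY]
    rcases eq_or_lt_of_le hT0 with hT0' | hTpos
    · rw [← hT0', Real.zero_rpow (by positivity)]
      exact Real.sqrt_nonneg _
    · have hkey : T * T ≤ (T ^ ((p-1)/p) * T ^ ((p-1)/p)) *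
          ((traceAbsPow p X) ^ (1/p) * (traceAbsPow p Z) ^ (1/p)) := by
        have h1 : T * T ≤ (∑ i ∈ S, s i ^ (p-1) * Real.sqrt (a i * c i)) ^ 2 := by
          rw [sq]
          exact mul_le_mul step1 step1 hT0 (le_trans hT0 step1)
        refine h1.trans (step2.trans ?_)
        have hnn1 : 0 ≤ ∑ i ∈ S, s i ^ (p-1) * a i :=
          Finset.sum_nonneg fun i _ => mul_nonneg (Real.rpow_nonneg (hs0 i) _) (ha0 i)
        calc (∑ i ∈ S, s i ^ (p-1) * a i) * (∑ i ∈ S, s i ^ (p-1) * c i)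
            ≤ (T ^ ((p-1)/p) * (traceAbsPow p X) ^ (1/p)) *
              (T ^ ((p-1)/p) * (traceAbsPow p Z) ^ (1/p)) := by
              refine mul_le_mul step3 step4 ?_
                (mul_nonneg (Real.rpow_nonneg hT0 _) (Real.rpow_nonneg (htap_nonneg X) _))
              exact Finset.sum_nonneg fun i _ =>
                mul_nonneg (Real.rpow_nonneg (hs0 i) _) (hc0 i)
          _ = (T ^ ((p-1)/p) * T ^ ((p-1)/p)) *
              ((traceAbsPow p X) ^ (1/p) * (traceAbsPow p Z) ^ (1/p)) := by ring
      have hsplit : T = T ^ ((p-1)/p) * T ^ (1/p) := by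
        rw [← Real.rpow_add hTpos]
        rw [show (p-1)/p + 1/p = 1 by field_simp; ring]
        exact (Real.rpow_one _).symm
      have hD : (0:ℝ) < T ^ ((p-1)/p) := Real.rpow_pos_of_pos hTpos _
      have h2 : T ^ (1/p) * T ^ (1/p) ≤
          (traceAbsPow p X) ^ (1/p) * (traceAbsPow p Z) ^ (1/p) := by
        have hkey2 : (T ^ ((p-1)/p) * T ^ ((p-1)/p)) * (T ^ (1/p) * T ^ (1/p)) ≤
            (T ^ ((p-1)/p) * T ^ ((p-1)/p)) *
              ((traceAbsPow p X) ^ (1/p) * (traceAbsPow p Z) ^ (1/p)) := by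
          calc (T ^ ((p-1)/p) * T ^ ((p-1)/p)) * (T ^ (1/p) * T ^ (1/p))
              = (T ^ ((p-1)/p) * T ^ (1/p)) * (T ^ ((p-1)/p) * T ^ (1/p)) := by ring
            _ = T * T := by rw [← hsplit]
            _ ≤ _ := hkey
        exact le_of_mul_le_mul_left hkey2 (mul_pos hD hD)
      have hy0 : 0 ≤ traceAbsPow p X ^ (1/p) * traceAbsPow p Z ^ (1/p) :=
        mul_nonneg (Real.rpow_nonneg (htap_nonneg X) _) (Real.rpow_nonneg (htap_nonneg Z) _)
      refine (Real.le_sqrt (Real.rpow_nonneg hT0 _) hy0).mpr ?_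
      rw [sq]
      exact h2
  refine ⟨part1, Matrix.PosSemidef.of_dotProduct_mulVec_nonneg ?_ ?_⟩
  · -- Hermitian
    show (!![schattenNorm p X, schattenNorm p Y; schattenNorm p Y, schattenNorm p Z]
        : Matrix (Fin 2) (Fin 2) ℝ).IsHermitian
    rw [Matrix.IsHermitian]
    ext i j
    fin_cases i <;> fin_cases j <;> simp [Matrix.conjTranspose_apply]
  · -- quadratic form
    intro x
    have hbX : 0 ≤ schattenNorm p X := Real.rpow_nonneg (htap_nonneg X) _
    have hbY : 0 ≤ schattenNorm p Y := Real.rpow_nonneg (htap_nonneg Y) _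
    have hbZ : 0 ≤ schattenNorm p Z := Real.rpow_nonneg (htap_nonneg Z) _
    have hb2 : schattenNorm p Y ^ 2 ≤ schattenNorm p X * schattenNorm p Z := by
      have := part1
      have h1 : schattenNorm p Y ^ 2 ≤ Real.sqrt (schattenNorm p X * schattenNorm p Z) ^ 2 := by
        exact pow_le_pow_left₀ hbY this 2
      rwa [Real.sq_sqrt (mul_nonneg hbX hbZ)] at h1
    have hxx : star x = x := by
      funext k; simp
    rw [hxx]
    simp only [dotProduct, mulVec, Fin.sum_univ_two, Matrix.cons_val_zero, Matrix.cons_val_one,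
      Matrix.head_cons, Matrix.head_fin_const, Matrix.cons_val_fin_one, Matrix.cons_val']
    set A' := schattenNorm p X
    set B' := schattenNorm p Y
    set C' := schattenNorm p Z
    simp only [show (!![A', B'; B', C'] : Matrix (Fin 2) (Fin 2) ℝ) 0 0 = A' from rfl,
      show (!![A', B'; B', C'] : Matrix (Fin 2) (Fin 2) ℝ) 0 1 = B' from rfl,
      show (!![A', B'; B', C'] : Matrix (Fin 2) (Fin 2) ℝ) 1 0 = B' from rfl,
      show (!![A', B'; B', C'] : Matrix (Fin 2) (Fin 2) ℝ) 1 1 = C' from rfl]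
    rcases eq_or_lt_of_le (add_nonneg hbX hbZ) with hac | hac
    · have hA'0 : A' = 0 := by linarith
      have hC'0 : C' = 0 := by linarith
      have hB'0 : B' = 0 := by nlinarith [hb2, hbY]
      simp [hA'0, hB'0, hC'0]
    · nlinarith [sq_nonneg (A' * x 0 + B' * x 1), sq_nonneg (B' * x 0 + C' * x 1),
        mul_nonneg (sub_nonneg.2 hb2) (sq_nonneg (x 0)),
        mul_nonneg (sub_nonneg.2 hb2) (sq_nonneg (x 1)), hac]
end
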